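/- arXiv:2211.08746 — 8 statements merged into one kernel-verified Lean document; each statement's English description precedes it below -/
import Mathlib

section
/- For all natural numbers n and k with k ≤ n, the two expressions for the number of set partitions of an n-element set with k distinguished blocks agree: ∑_{j=k}^{n} C(n,j) · S(j,k) · B(n−j) = ∑_{j=k}^{n} C(j,k) · S(n,j), where C denotes the binomial coefficient. -/
open Finset

section MapEmb
variable {α β : Type*} [DecidableEq α] [DecidableEq β]

/-- Transfer a finpartition along an embedding. -/
def finpartMap (f : α ↪ β) {s : Finset α} (P : Finpartition s) : Finpartition (s.map f) where
  parts := P.parts.map ⟨Finset.map f, Finset.map_injective f⟩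
  supIndep := by
    rw [Finset.supIndep_iff_pairwiseDisjoint]
    rintro a ha b hb hab
    simp only [coe_map, Set.mem_image, mem_coe, Function.Embedding.coeFn_mk] at ha hb
    obtain ⟨t, ht, rfl⟩ := ha
    obtain ⟨u, hu, rfl⟩ := hb
    simp only [id, Function.onFun]
    rw [Finset.disjoint_map]
    exact P.disjoint ht hu (fun h => hab (by rw [h]))
  sup_parts := by
    ext b
    simp only [mem_sup, mem_map, Function.Embedding.coeFn_mk, id]
    constructor
    · rintro ⟨t, ⟨u, hu, rfl⟩, hb⟩
      rw [mem_map] at hb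
      obtain ⟨a, ha, rfl⟩ := hb
      exact ⟨a, by rw [← P.sup_parts]; exact mem_sup.2 ⟨u, hu, ha⟩, rfl⟩
    · rintro ⟨a, ha, rfl⟩
      rw [← P.sup_parts, mem_sup] at ha
      obtain ⟨u, hu, hau⟩ := ha
      exact ⟨u.map f, ⟨u, hu, rfl⟩, mem_map_of_mem f hau⟩
  bot_notMem := by
    simp only [bot_eq_empty, mem_map, Function.Embedding.coeFn_mk]
    rintro ⟨t, ht, h⟩
    rw [Finset.map_eq_empty] at h
    subst h
    exact P.bot_notMem ht

@[simp] lemma finpartMap_parts (f : α ↪ β) {s : Finset α} (P : Finpartition s) :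
    (finpartMap f P).parts = P.parts.map ⟨Finset.map f, Finset.map_injective f⟩ := rfl

lemma finpartMap_bijective (f : α ↪ β) (s : Finset α) :
    Function.Bijective (finpartMap f (s := s)) := by
  constructor
  · intro P Q h
    have := congrArg Finpartition.parts h
    simp only [finpartMap_parts] at this
    exact Finpartition.ext (Finset.map_injective _ this)
  · intro Q
    have hmap : ∀ u ∈ Q.parts, (u.preimage f f.injective.injOn).map f = u := by
      intro u hu
      obtain ⟨u', _, rfl⟩ := Finset.subset_map_iff.1 (Q.le hu)
      rw [Finset.preimage_map]
    refine ⟨⟨Q.parts.image (fun u => u.preimage f f.injective.injOn), ?_, ?_, ?_⟩, ?_⟩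
    · rw [Finset.supIndep_iff_pairwiseDisjoint]
      rintro a ha b hb hab
      simp only [coe_image, Set.mem_image, mem_coe] at ha hb
      obtain ⟨t, ht, rfl⟩ := ha
      obtain ⟨u, hu, rfl⟩ := hb
      simp only [id, Function.onFun]
      rw [← Finset.disjoint_map f, hmap t ht, hmap u hu]
      exact Q.disjoint ht hu (fun h => hab (by rw [h]))
    · ext a
      simp only [mem_sup, mem_image, id]
      constructor
      · rintro ⟨t, ⟨u, hu, rfl⟩, ha⟩
        have : f a ∈ u := by
          rw [← hmap u hu]
          exact mem_map_of_mem f ha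
        have : f a ∈ s.map f := Q.le hu this
        rwa [Finset.mem_map' f] at this
      · intro ha
        have : f a ∈ s.map f := mem_map_of_mem f ha
        rw [← Q.sup_parts, mem_sup] at this
        obtain ⟨u, hu, hfa⟩ := this
        refine ⟨u.preimage f f.injective.injOn, ⟨u, hu, rfl⟩, ?_⟩
        rw [Finset.mem_preimage]
        exact hfa
    · simp only [bot_eq_empty, mem_image]
      rintro ⟨u, hu, h⟩
      apply Q.bot_notMem
      have := hmap u hu
      rw [h, Finset.map_empty] at this
      rw [bot_eq_empty, this]
      exact hu
    · apply Finpartition.ext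
      simp only [finpartMap_parts]
      ext b
      simp only [Finset.mem_map, Finset.mem_image, Function.Embedding.coeFn_mk]
      constructor
      · rintro ⟨t, ⟨u, hu, rfl⟩, rfl⟩
        rwa [hmap u hu]
      · intro hb
        exact ⟨b.preimage f f.injective.injOn, ⟨b, hb, rfl⟩, hmap b hb⟩

/-- Transfer a finpartition along an embedding, as an equivalence. -/
noncomputable def finpartEquivMap (f : α ↪ β) (s : Finset α) :
    Finpartition s ≃ Finpartition (s.map f) :=
  Equiv.ofBijective _ (finpartMap_bijective f s)

@[simp] lemma card_parts_finpartEquivMap (f : α ↪ β) (s : Finset α) (P : Finpartition s) :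
    ((finpartEquivMap f s) P).parts.card = P.parts.card := Finset.card_map _

/-- Changing the underlying set along an equality, as an equivalence. -/
def finpartEquivCopy {γ : Type*} [Lattice γ] [OrderBot γ] {a b : γ} (h : a = b) :
    Finpartition a ≃ Finpartition b where
  toFun P := P.copy h
  invFun P := P.copy h.symm
  left_inv P := by ext; simp
  right_inv P := by ext; simp

@[simp] lemma card_parts_finpartEquivCopy {γ : Type*} [Lattice γ] [OrderBot γ] {a b : γ}
    (h : a = b) (P : Finpartition a) :
    ((finpartEquivCopy h) P).parts.card = P.parts.card := rfl

/-- Any finpartition of a finset is equivalent to a finpartition of `univ : Finset (Fin #s)`. -/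
noncomputable def finpartEquivFin (s : Finset α) :
    Finpartition s ≃ Finpartition (Finset.univ : Finset (Fin s.card)) :=
  (((finpartEquivMap (Function.Embedding.subtype (· ∈ s)) Finset.univ).trans
      (finpartEquivCopy (by rw [Finset.univ_eq_attach, Finset.attach_map_val]))).symm).trans
    ((finpartEquivMap s.equivFin.toEmbedding Finset.univ).trans
      (finpartEquivCopy (Finset.map_univ_equiv _)))

lemma card_parts_finpartEquivFin (s : Finset α) (P : Finpartition s) :
    ((finpartEquivFin s) P).parts.card = P.parts.card := by
  unfold finpartEquivFin
  simp only [Equiv.trans_apply, card_parts_finpartEquivCopy, card_parts_finpartEquivMap]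
  set e := (finpartEquivMap (Function.Embedding.subtype (· ∈ s)) Finset.univ).trans
      (finpartEquivCopy (a := (Finset.univ.map (Function.Embedding.subtype (· ∈ s))))
        (by rw [Finset.univ_eq_attach, Finset.attach_map_val])) with he
  have : ∀ Q, (e Q).parts.card = Q.parts.card := by
    intro Q
    simp only [he, Equiv.trans_apply, card_parts_finpartEquivCopy, card_parts_finpartEquivMap]
  rw [← this (e.symm P), Equiv.apply_symm_apply]
end MapEmb

/-- The `n`-th Bell number: the number of set partitions of an `n`-element set. -/
noncomputable def bell (n : ℕ) : ℕ := Nat.card (Finpartition (Finset.univ : Finset (Fin n)))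

/-- The Stirling number of the second kind `S(n,k)`: the number of set partitions of an
`n`-element set into exactly `k` nonempty blocks. -/
noncomputable def stirling (n k : ℕ) : ℕ :=
  Nat.card {P : Finpartition (Finset.univ : Finset (Fin n)) // P.parts.card = k}

section Counting
variable {α : Type*} [DecidableEq α]

lemma card_finpartition (s : Finset α) : Nat.card (Finpartition s) = bell s.card :=
  Nat.card_congr (finpartEquivFin s)

lemma card_finpartition_parts (s : Finset α) (k : ℕ) :
    Nat.card {P : Finpartition s // P.parts.card = k} = stirling s.card k :=
  Nat.card_congr ((finpartEquivFin s).subtypeEquiv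
    (fun P => by rw [card_parts_finpartEquivFin]))

lemma stirling_eq_zero {n k : ℕ} (h : n < k) : stirling n k = 0 := by
  have : IsEmpty {P : Finpartition (Finset.univ : Finset (Fin n)) // P.parts.card = k} := by
    refine ⟨fun ⟨P, hP⟩ => ?_⟩
    have h1 : P.parts.card ≤ (Finset.univ : Finset (Fin n)).card := P.card_parts_le_card
    rw [hP, Finset.card_univ, Fintype.card_fin] at h1
    omega
  rw [stirling, Nat.card_eq_zero]
  exact Or.inl this

end Counting
section Main
open Finset

variable {n k : ℕ}

/-- Pairs of a finpartition of `Fin n` together with `k` distinguished parts. -/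
abbrev PT (n k : ℕ) :=
  {p : Finpartition (Finset.univ : Finset (Fin n)) × Finset (Finset (Fin n)) //
    p.2 ⊆ p.1.parts ∧ p.2.card = k}

/-- Join a partition of `A` and a partition of `Aᶜ` into a partition of everything. -/
def joinCompl {A : Finset (Fin n)} (Q : Finpartition A) (R : Finpartition Aᶜ) :
    Finpartition (Finset.univ : Finset (Fin n)) where
  parts := Q.parts ∪ R.parts
  supIndep := by
    rw [Finset.supIndep_iff_pairwiseDisjoint]
    rintro t ht u hu htu
    simp only [coe_union, Set.mem_union, mem_coe] at ht hu
    simp only [Function.onFun, id]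
    rcases ht with ht | ht <;> rcases hu with hu | hu
    · exact Q.disjoint ht hu htu
    · exact (disjoint_compl_right : Disjoint A Aᶜ).mono (Q.le ht) (R.le hu)
    · exact ((disjoint_compl_right : Disjoint A Aᶜ).mono (Q.le hu) (R.le ht)).symm
    · exact R.disjoint ht hu htu
  sup_parts := by
    rw [Finset.sup_union, Q.sup_parts, R.sup_parts, sup_eq_union, union_compl]
  bot_notMem := by
    rw [mem_union]
    rintro (h | h)
    · exact Q.bot_notMem h
    · exact R.bot_notMem h

@[simp] lemma joinCompl_parts {A : Finset (Fin n)} (Q : Finpartition A) (R : Finpartition Aᶜ) :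
    (joinCompl Q R).parts = Q.parts ∪ R.parts := rfl

lemma disjoint_parts {A : Finset (Fin n)} (Q : Finpartition A) (R : Finpartition Aᶜ) :
    Disjoint Q.parts R.parts := by
  rw [Finset.disjoint_left]
  intro t htQ htR
  have h1 : t ≤ A := Q.le htQ
  have h2 : t ≤ Aᶜ := R.le htR
  have : t ≤ A ⊓ Aᶜ := le_inf h1 h2
  rw [inf_compl_eq_bot, le_bot_iff] at this
  exact Q.ne_bot htQ this

lemma sdiff_sup_eq_compl {P : Finpartition (Finset.univ : Finset (Fin n))}
    {T : Finset (Finset (Fin n))} (hT : T ⊆ P.parts) :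
    (P.parts \ T).sup id = (T.sup id)ᶜ := by
  have hdisj : Disjoint (T.sup id) ((P.parts \ T).sup id) := by
    rw [Finset.disjoint_left]
    intro a haT haS
    rw [mem_sup] at haT haS
    obtain ⟨t, ht, hat⟩ := haT
    obtain ⟨u, hu, hau⟩ := haS
    rw [mem_sdiff] at hu
    have hne : t ≠ u := fun h => hu.2 (h ▸ ht)
    exact Finset.disjoint_left.1 (P.disjoint (hT ht) hu.1 hne) hat hau
  have hsup : T.sup id ⊔ (P.parts \ T).sup id = Finset.univ := by
    rw [← Finset.sup_union, Finset.union_sdiff_of_subset hT, P.sup_parts]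
  have : IsCompl (T.sup id) ((P.parts \ T).sup id) :=
    ⟨hdisj, codisjoint_iff.2 (by rw [hsup, Finset.top_eq_univ])⟩
  exact this.compl_eq.symm

/-- The fiber of `PT n k` over a fixed distinguished support `A`. -/
noncomputable def fiberEquiv (A : Finset (Fin n)) :
    {x : PT n k // x.1.2.sup id = A} ≃
      ({Q : Finpartition A // Q.parts.card = k} × Finpartition Aᶜ) where
  toFun x :=
    (⟨x.1.1.1.ofSubset x.1.2.1 x.2, by simp only [Finpartition.ofSubset_parts]; exact x.1.2.2⟩,
      x.1.1.1.ofSubset sdiff_subset (by rw [sdiff_sup_eq_compl x.1.2.1, x.2]))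
  invFun y :=
    ⟨⟨(joinCompl y.1.1 y.2, y.1.1.parts),
      ⟨by simp, y.1.2⟩⟩, y.1.1.sup_parts⟩
  left_inv x := by
    obtain ⟨⟨⟨P, T⟩, hT, hk⟩, hA⟩ := x
    refine Subtype.ext (Subtype.ext (Prod.ext ?_ ?_))
    · apply Finpartition.ext
      simp only [joinCompl_parts, Finpartition.ofSubset_parts]
      exact union_sdiff_of_subset hT
    · simp
  right_inv y := by
    obtain ⟨⟨Q, hQ⟩, R⟩ := y
    refine Prod.ext (Subtype.ext ?_) ?_
    · apply Finpartition.ext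
      simp
    · apply Finpartition.ext
      simp only [Finpartition.ofSubset_parts, joinCompl_parts]
      exact union_sdiff_cancel_left (disjoint_parts Q R)

end Main
section Count
open Finset

lemma sum_fin_group {ι : Type*} [Fintype ι] (g : ι → ℕ) (F : ℕ → ℕ) (n : ℕ)
    (hg : ∀ x, g x ≤ n) :
    ∑ x : ι, F (g x) = ∑ j ∈ Finset.range (n + 1), (Finset.univ.filter fun x => g x = j).card * F j := by
  classical
  rw [← Finset.sum_fiberwise_of_maps_to (g := g) (t := Finset.range (n + 1))
    (fun x _ => Finset.mem_range.2 (Nat.lt_succ_of_le (hg x))) (fun x => F (g x))]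
  refine Finset.sum_congr rfl (fun j _ => ?_)
  rw [Finset.sum_congr rfl (fun x hx => by rw [(Finset.mem_filter.1 hx).2]),
    Finset.sum_const, smul_eq_mul]

variable {n k : ℕ}

lemma card_filter_stirling (n j : ℕ) :
    (Finset.univ.filter fun P : Finpartition (Finset.univ : Finset (Fin n)) =>
      P.parts.card = j).card = stirling n j := by
  rw [stirling, Nat.card_eq_fintype_card, Fintype.card_subtype]

lemma card_PT_right (n k : ℕ) (hk : k ≤ n) :
    Nat.card (PT n k) = ∑ j ∈ Finset.Icc k n, j.choose k * stirling n j := by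
  classical
  have e : PT n k ≃ Σ P : Finpartition (Finset.univ : Finset (Fin n)),
      {T // T ∈ P.parts.powersetCard k} :=
    { toFun := fun x => ⟨x.1.1, ⟨x.1.2, Finset.mem_powersetCard.2 ⟨x.2.1, x.2.2⟩⟩⟩
      invFun := fun y => ⟨(y.1, y.2.1), (Finset.mem_powersetCard.1 y.2.2).1,
        (Finset.mem_powersetCard.1 y.2.2).2⟩
      left_inv := fun x => rfl
      right_inv := fun y => rfl }
  rw [Nat.card_congr e, Nat.card_eq_fintype_card, Fintype.card_sigma]
  have : ∀ P : Finpartition (Finset.univ : Finset (Fin n)),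
      Fintype.card {T // T ∈ P.parts.powersetCard k} = (P.parts.card).choose k := by
    intro P
    rw [Fintype.card_coe, Finset.card_powersetCard]
  rw [Finset.sum_congr rfl (fun P _ => this P)]
  have hbound : ∀ P : Finpartition (Finset.univ : Finset (Fin n)), P.parts.card ≤ n := by
    intro P
    have := P.card_parts_le_card
    rwa [Finset.card_univ, Fintype.card_fin] at this
  rw [sum_fin_group _ (fun j => j.choose k) n hbound]
  rw [← Finset.sum_subset ((fun j hj => Finset.mem_range.2 (Nat.lt_succ_of_le (Finset.mem_Icc.1 hj).2) : Finset.Icc k n ⊆ Finset.range (n+1)))]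
  · exact Finset.sum_congr rfl (fun j _ => by rw [card_filter_stirling, mul_comm])
  · intro j hj hj2
    rw [Finset.mem_range] at hj
    rw [Finset.mem_Icc] at hj2
    have : j < k := by omega
    rw [Nat.choose_eq_zero_of_lt this, mul_zero]

lemma card_PT_left (n k : ℕ) (hk : k ≤ n) :
    Nat.card (PT n k) = ∑ j ∈ Finset.Icc k n, n.choose j * stirling j k * bell (n - j) := by
  classical
  rw [Nat.card_congr (Equiv.sigmaFiberEquiv (fun x : PT n k => x.1.2.sup id)).symm,
    Nat.card_eq_fintype_card, Fintype.card_sigma]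
  have key : ∀ A : Finset (Fin n),
      Fintype.card {x : PT n k // x.1.2.sup id = A} = stirling A.card k * bell (n - A.card) := by
    intro A
    rw [Fintype.card_congr (fiberEquiv A), Fintype.card_prod,
      ← Nat.card_eq_fintype_card, ← Nat.card_eq_fintype_card,
      card_finpartition_parts, card_finpartition, Finset.card_compl,
      Fintype.card_fin]
  rw [Finset.sum_congr rfl (fun A _ => key A),
    sum_fin_group (fun A : Finset (Fin n) => A.card)
      (fun j => stirling j k * bell (n - j)) n (fun A => by
        show A.card ≤ n
        have := Finset.card_le_univ A
        rwa [Fintype.card_fin] at this)]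
  have hfil : ∀ j, (Finset.univ.filter fun A : Finset (Fin n) => A.card = j) =
      Finset.powersetCard j Finset.univ := by
    intro j
    ext A
    simp [Finset.mem_powersetCard_univ]
  rw [← Finset.sum_subset ((fun j hj => Finset.mem_range.2 (Nat.lt_succ_of_le (Finset.mem_Icc.1 hj).2) : Finset.Icc k n ⊆ Finset.range (n+1)))]
  · refine Finset.sum_congr rfl (fun j _ => ?_)
    rw [hfil, Finset.card_powersetCard, Finset.card_univ, Fintype.card_fin, mul_assoc]
  · intro j hj hj2
    rw [Finset.mem_range] at hj
    rw [Finset.mem_Icc] at hj2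
    have : j < k := by omega
    rw [stirling_eq_zero this, zero_mul, mul_zero]

end Count

/-- The two expressions for the number of set partitions of an `n`-element set with `k`
distinguished blocks agree. -/
theorem stmt0 (n k : ℕ) (hk : k ≤ n) :
    ∑ j ∈ Finset.Icc k n, n.choose j * stirling j k * bell (n - j)
      = ∑ j ∈ Finset.Icc k n, j.choose k * stirling n j := by
  rw [← card_PT_left n k hk, ← card_PT_right n k hk]
end

section
/- For every natural number n, the Bell number of 2n satisfies B(2n) = ∑_{k=0}^{n} k! · ( ∑_{j=k}^{n} C(j,k) · S(n,j) )², where C denotes the binomial coefficient. -/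
namespace BellAux

open Finset

/-! ### Setoids vs finpartitions -/

instance finiteSetoid {α : Type*} [Finite α] : Finite (Setoid α) :=
  Finite.of_injective (fun s => s.r) (fun s t h => by cases s; cases t; congr)

section FP

variable {α : Type*} [DecidableEq α] [Fintype α]

lemma fp_ext {P Q : Finpartition (univ : Finset α)} (h : ∀ a, P.part a = Q.part a) :
    P = Q := by
  apply Finpartition.ext
  ext t
  constructor
  · intro ht
    obtain ⟨a, ha⟩ := P.nonempty_of_mem_parts ht
    rw [← P.part_eq_of_mem ht ha, h a]
    exact Q.part_mem.2 (mem_univ a)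
  · intro ht
    obtain ⟨a, ha⟩ := Q.nonempty_of_mem_parts ht
    rw [← Q.part_eq_of_mem ht ha, ← h a]
    exact P.part_mem.2 (mem_univ a)

/-- The finpartition associated to a setoid. -/
noncomputable def toFP (s : Setoid α) : Finpartition (univ : Finset α) :=
  letI : DecidableRel s.r := Classical.decRel _
  Finpartition.ofSetoid s

lemma mem_part_toFP {s : Setoid α} {a b : α} : b ∈ (toFP s).part a ↔ s.r a b := by
  letI : DecidableRel s.r := Classical.decRel _
  exact Finpartition.mem_part_ofSetoid_iff_rel

lemma toFP_bijective : Function.Bijective (toFP (α := α)) := by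
  constructor
  · intro s t h
    have : ∀ a b : α, s.r a b ↔ t.r a b := by
      intro a b
      rw [← mem_part_toFP (s := s), ← mem_part_toFP (s := t), h]
    ext a b; exact this a b
  · intro P
    refine ⟨⟨fun a b => P.part a = P.part b,
      ⟨fun _ => rfl, fun h => h.symm, fun h h' => h.trans h'⟩⟩, ?_⟩
    apply fp_ext
    intro a
    ext b
    rw [mem_part_toFP]
    show P.part a = P.part b ↔ _
    constructor
    · intro h; rw [h]; exact P.mem_part (mem_univ b)
    · intro hb; exact ((P.mem_part_iff_part_eq_part (mem_univ b) (mem_univ a)).1 hb).symm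

/-- Number of classes of a setoid. -/
noncomputable def nclasses {β : Type*} (s : Setoid β) : ℕ := Nat.card (Quotient s)

lemma card_parts_toFP (s : Setoid α) :
    (toFP s).parts.card = nclasses s := by
  letI : Fintype (Quotient s) := Fintype.ofFinite _
  have hinj : Function.Injective (fun q : Quotient s => (toFP s).part q.out) := by
    intro x y h
    have h' : (toFP s).part x.out = (toFP s).part y.out := h
    have hx : s.r x.out y.out := by
      rw [← mem_part_toFP, h']
      exact (toFP s).mem_part (mem_univ _)
    calc x = ⟦x.out⟧ := (Quotient.out_eq x).symm
      _ = ⟦y.out⟧ := Quotient.sound hx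
      _ = y := Quotient.out_eq y
  have himg : Finset.image (fun q : Quotient s => (toFP s).part q.out) univ
      = (toFP s).parts := by
    ext t
    simp only [Finset.mem_image, mem_univ, true_and]
    constructor
    · rintro ⟨q, rfl⟩; exact (toFP s).part_mem.2 (mem_univ _)
    · intro ht
      obtain ⟨a, ha⟩ := (toFP s).nonempty_of_mem_parts ht
      refine ⟨⟦a⟧, ?_⟩
      rw [← (toFP s).part_eq_of_mem ht ha]
      apply (toFP s).eq_of_mem_parts ((toFP s).part_mem.2 (mem_univ _))
        ((toFP s).part_mem.2 (mem_univ _)) _ ((toFP s).mem_part (mem_univ a))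
      rw [mem_part_toFP]
      exact Quotient.exact (Quotient.out_eq ⟦a⟧)
  rw [← himg, Finset.card_image_of_injective _ hinj, Finset.card_univ, nclasses,
    Nat.card_eq_fintype_card]

end FP

lemma bell_eq (m : ℕ) :
    Nat.card (Finpartition (univ : Finset (Fin m))) = Nat.card (Setoid (Fin m)) :=
  (Nat.card_eq_of_bijective _ toFP_bijective).symm

lemma stirling_eq (n k : ℕ) :
    Nat.card {P : Finpartition (univ : Finset (Fin n)) // P.parts.card = k}
      = Nat.card {s : Setoid (Fin n) // nclasses s = k} := by
  apply Nat.card_congr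
  exact ((Equiv.ofBijective _ toFP_bijective).subtypeEquiv
    (fun s => by rw [Equiv.ofBijective_apply, card_parts_toFP])).symm

/-! ### Partial bijections -/

/-- A partial bijection between `X` and `Y`, as a relation that is functional and injective. -/
structure PB (X Y : Type*) where
  rel : X → Y → Prop
  left : ∀ {x y y'}, rel x y → rel x y' → y = y'
  right : ∀ {x x' y}, rel x y → rel x' y → x = x'

lemma PB.ext' {X Y : Type*} {m m' : PB X Y} (h : ∀ x y, m.rel x y ↔ m'.rel x y) : m = m' := by
  cases m; cases m'
  have : _ = _ := funext fun x => funext fun y => propext (h x y)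
  congr

section PBCount

variable {X Y : Type*}

instance finitePB [Finite X] [Finite Y] : Finite (PB X Y) :=
  Finite.of_injective (fun m => m.rel) (fun m m' h => PB.ext' (fun x y => by
    have h' : m.rel = m'.rel := h
    rw [h']))

open Classical in
/-- Domain of definition of a partial bijection. -/
noncomputable def PB.dom [Fintype X] (m : PB X Y) : Finset X :=
  univ.filter (fun x => ∃ y, m.rel x y)

lemma PB.mem_dom [Fintype X] {m : PB X Y} {x : X} : x ∈ m.dom ↔ ∃ y, m.rel x y := by
  classical
  simp [PB.dom]

variable [Fintype X]

/-- A partial bijection built from an embedding on `S`. -/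
noncomputable def ofEmb (S : Finset X) (f : ↥S ↪ Y) : {m : PB X Y // m.dom = S} :=
  ⟨{ rel := fun x y => ∃ hx : x ∈ S, f ⟨x, hx⟩ = y
     left := by rintro x y y' ⟨hx, rfl⟩ ⟨hx', rfl⟩; rfl
     right := by
      rintro x x' y ⟨hx, rfl⟩ ⟨hx', hy⟩
      exact congrArg Subtype.val (f.injective hy).symm },
   by
    ext x
    rw [PB.mem_dom]
    constructor
    · rintro ⟨y, hx, rfl⟩; exact hx
    · intro hx; exact ⟨f ⟨x, hx⟩, hx, rfl⟩⟩

/-- The embedding extracted from a partial bijection with domain `S`. -/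
noncomputable def toEmb (S : Finset X) (m : {m : PB X Y // m.dom = S}) : ↥S ↪ Y where
  toFun x := Classical.choose (PB.mem_dom.1 (show x.1 ∈ m.1.dom by rw [m.2]; exact x.2))
  inj' := by
    rintro ⟨x₁, h₁⟩ ⟨x₂, h₂⟩ hf
    have s₁ := Classical.choose_spec
      (PB.mem_dom.1 (show x₁ ∈ m.1.dom by rw [m.2]; exact h₁))
    have s₂ := Classical.choose_spec
      (PB.mem_dom.1 (show x₂ ∈ m.1.dom by rw [m.2]; exact h₂))
    have hf2 : Classical.choose
        (PB.mem_dom.1 (show x₁ ∈ m.1.dom by rw [m.2]; exact h₁)) = Classical.choose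
        (PB.mem_dom.1 (show x₂ ∈ m.1.dom by rw [m.2]; exact h₂)) := hf
    rw [hf2] at s₁
    exact Subtype.ext (m.1.right s₁ s₂)

noncomputable def domFiberEquiv (S : Finset X) :
    {m : PB X Y // m.dom = S} ≃ (↥S ↪ Y) where
  toFun := toEmb S
  invFun := ofEmb S
  left_inv := by
    rintro ⟨m, h⟩
    apply Subtype.ext
    apply PB.ext'
    intro x y
    constructor
    · rintro ⟨hx, rfl⟩
      exact Classical.choose_spec
        (PB.mem_dom.1 (show x ∈ m.dom by rw [h]; exact hx))
    · intro hxy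
      have hx : x ∈ S := h ▸ PB.mem_dom.2 ⟨y, hxy⟩
      refine ⟨hx, ?_⟩
      exact m.left (Classical.choose_spec
        (PB.mem_dom.1 (show x ∈ m.dom by rw [h]; exact hx))) hxy
  right_inv := by
    intro f
    apply Function.Embedding.ext
    intro x
    have key := Classical.choose_spec
      (PB.mem_dom.1 (show x.1 ∈ (ofEmb S f).1.dom by rw [(ofEmb S f).2]; exact x.2))
    obtain ⟨hx, hc⟩ := key
    show Classical.choose _ = f x
    rw [← hc]

/-- Counting partial bijections. -/
lemma card_PB [Fintype Y] :
    Nat.card (PB X Y) = ∑ k ∈ range (Fintype.card X + 1),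
      (Fintype.card X).choose k * (Fintype.card Y).descFactorial k := by
  classical
  letI : Fintype (PB X Y) := Fintype.ofFinite _
  have h1 : Nat.card (PB X Y) = ∑ S : Finset X, Nat.card {m : PB X Y // m.dom = S} := by
    rw [← Nat.card_congr (Equiv.sigmaFiberEquiv (PB.dom : PB X Y → Finset X))]
    letI : ∀ S : Finset X, Fintype {m : PB X Y // m.dom = S} := fun S => Fintype.ofFinite _
    rw [Nat.card_eq_fintype_card, Fintype.card_sigma]
    simp [Nat.card_eq_fintype_card]
  have h2 : ∀ S : Finset X, Nat.card {m : PB X Y // m.dom = S}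
      = (Fintype.card Y).descFactorial S.card := by
    intro S
    rw [Nat.card_congr (domFiberEquiv S), Nat.card_eq_fintype_card,
      Fintype.card_embedding_eq, Fintype.card_coe]
  rw [h1]
  simp_rw [h2]
  rw [show (univ : Finset (Finset X)) = (univ : Finset X).powerset from
    Finset.powerset_univ.symm]
  rw [Finset.sum_powerset_apply_card (fun k => (Fintype.card Y).descFactorial k)]
  simp [Finset.card_univ, Nat.smul_one_eq_cast]

end PBCount

/-! ### Gluing setoids on a sum type -/

section Mix

variable {A B : Type*}

/-- Glue two setoids and a partial bijection between their quotients into a setoid on the sum. -/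
def mix (sa : Setoid A) (sb : Setoid B) (m : PB (Quotient sa) (Quotient sb)) :
    Setoid (A ⊕ B) where
  r x y := match x, y with
    | .inl a, .inl a' => sa.r a a'
    | .inl a, .inr b => m.rel ⟦a⟧ ⟦b⟧
    | .inr b, .inl a => m.rel ⟦a⟧ ⟦b⟧
    | .inr b, .inr b' => sb.r b b'
  iseqv := by
    constructor
    · rintro (a | b)
      · exact sa.refl a
      · exact sb.refl b
    · rintro (a | b) (a' | b') h
      · exact sa.symm h
      · exact h
      · exact h
      · exact sb.symm h
    · rintro (a | b) (a' | b') (a'' | b'') h h'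
      · exact sa.trans h h'
      · show m.rel ⟦a⟧ ⟦b''⟧
        rw [Quotient.sound (s := sa) (h : sa.r a a')]
        exact h'
      · exact Quotient.exact (m.right h h')
      · show m.rel ⟦a⟧ ⟦b''⟧
        rw [← Quotient.sound (s := sb) (h' : sb.r b' b'')]
        exact h
      · show m.rel ⟦a''⟧ ⟦b⟧
        rw [← Quotient.sound (s := sa) (h' : sa.r a' a'')]
        exact h
      · exact Quotient.exact (m.left h h')
      · show m.rel ⟦a''⟧ ⟦b⟧
        rw [Quotient.sound (s := sb) (h : sb.r b b')]
        exact h'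
      · exact sb.trans h h'

namespace Fiber

variable (sa : Setoid A) (sb : Setoid B)

/-- The fiber of restriction over `(sa, sb)`. -/
def F : Type _ :=
  {r : Setoid (A ⊕ B) // Setoid.comap Sum.inl r = sa ∧ Setoid.comap Sum.inr r = sb}

variable {sa sb}

lemma resA_iff {r : Setoid (A ⊕ B)} (ha : Setoid.comap Sum.inl r = sa) {a a' : A} :
    sa.r a a' ↔ r.r (.inl a) (.inl a') := by
  rw [← ha]; exact Iff.rfl

lemma resB_iff {r : Setoid (A ⊕ B)} (hb : Setoid.comap Sum.inr r = sb) {b b' : B} :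
    sb.r b b' ↔ r.r (.inr b) (.inr b') := by
  rw [← hb]; exact Iff.rfl

/-- Extract the partial bijection between quotients from a setoid on the sum. -/
def extract (x : F sa sb) : PB (Quotient sa) (Quotient sb) where
  rel qa qb := ∃ a b, (⟦a⟧ : Quotient sa) = qa ∧ (⟦b⟧ : Quotient sb) = qb
    ∧ x.1.r (.inl a) (.inr b)
  left := by
    rintro qa qb qb' ⟨a, b, rfl, rfl, h⟩ ⟨a', b', ha', rfl, h'⟩
    have h1 : sa.r a' a := Quotient.exact ha'
    have h2 : x.1.r (.inl a') (.inl a) := (resA_iff x.2.1).1 h1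
    have : x.1.r (.inr b') (.inr b) := x.1.trans (x.1.symm h') (x.1.trans h2 h)
    exact Quotient.sound ((resB_iff x.2.2).2 (x.1.symm this))
  right := by
    rintro qa qa' qb ⟨a, b, rfl, rfl, h⟩ ⟨a', b', rfl, hb', h'⟩
    have h1 : sb.r b' b := Quotient.exact hb'
    have h2 : x.1.r (.inr b') (.inr b) := (resB_iff x.2.2).1 h1
    have : x.1.r (.inl a') (.inl a) := x.1.trans h' (x.1.trans h2 (x.1.symm h))
    exact (Quotient.sound ((resA_iff x.2.1).2 this)).symm

/-- The fiber over `(sa, sb)` is equivalent to partial bijections of the quotients. -/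
noncomputable def fiberEquiv : F sa sb ≃ PB (Quotient sa) (Quotient sb) where
  toFun := extract
  invFun m := ⟨mix sa sb m, Setoid.ext fun _ _ => Iff.rfl, Setoid.ext fun _ _ => Iff.rfl⟩
  left_inv := by
    rintro ⟨r, ha, hb⟩
    apply Subtype.ext
    apply Setoid.ext
    rintro (a | b) (a' | b')
    · show sa.r a a' ↔ r.r (.inl a) (.inl a')
      exact resA_iff ha
    · show (∃ a₀ b₀, (⟦a₀⟧ : Quotient sa) = ⟦a⟧ ∧ (⟦b₀⟧ : Quotient sb) = ⟦b'⟧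
        ∧ r.r (.inl a₀) (.inr b₀)) ↔ r.r (.inl a) (.inr b')
      constructor
      · rintro ⟨a₀, b₀, h1, h2, h3⟩
        exact r.trans ((resA_iff ha).1 (Quotient.exact h1.symm))
          (r.trans h3 ((resB_iff hb).1 (Quotient.exact h2)))
      · intro h; exact ⟨a, b', rfl, rfl, h⟩
    · show (∃ a₀ b₀, (⟦a₀⟧ : Quotient sa) = ⟦a'⟧ ∧ (⟦b₀⟧ : Quotient sb) = ⟦b⟧
        ∧ r.r (.inl a₀) (.inr b₀)) ↔ r.r (.inr b) (.inl a')
      constructor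
      · rintro ⟨a₀, b₀, h1, h2, h3⟩
        exact r.symm (r.trans ((resA_iff ha).1 (Quotient.exact h1.symm))
          (r.trans h3 ((resB_iff hb).1 (Quotient.exact h2))))
      · intro h; exact ⟨a', b, rfl, rfl, r.symm h⟩
    · show sb.r b b' ↔ r.r (.inr b) (.inr b')
      exact resB_iff hb
  right_inv := by
    intro m
    apply PB.ext'
    intro qa qb
    induction qa using Quotient.inductionOn
    induction qb using Quotient.inductionOn
    rename_i a b
    constructor
    · rintro ⟨a₀, b₀, h1, h2, h3⟩
      rw [← h1, ← h2]
      exact h3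
    · intro h
      exact ⟨a, b, rfl, rfl, h⟩

end Fiber

end Mix

/-! ### Counting lemmas -/

lemma card_eq_sum_fibers {γ β : Type*} [Finite γ] [Fintype β] (g : γ → β) :
    Nat.card γ = ∑ b : β, Nat.card {x // g x = b} := by
  classical
  rw [← Nat.card_congr (Equiv.sigmaFiberEquiv g)]
  letI : Fintype γ := Fintype.ofFinite _
  letI : ∀ b : β, Fintype {x // g x = b} := fun b => Fintype.ofFinite _
  rw [Nat.card_eq_fintype_card, Fintype.card_sigma]
  simp [Nat.card_eq_fintype_card]

/-- Setoids transport along equivalences. -/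
def setoidCongr {α β : Type*} (e : α ≃ β) : Setoid α ≃ Setoid β where
  toFun s := Setoid.comap e.symm s
  invFun s := Setoid.comap e s
  left_inv s := Setoid.ext fun a b => by rw [Setoid.comap_rel, Setoid.comap_rel]; simp
  right_inv s := Setoid.ext fun a b => by rw [Setoid.comap_rel, Setoid.comap_rel]; simp

lemma nclasses_le {α : Type*} [Fintype α] (s : Setoid α) :
    nclasses s ≤ Fintype.card α := by
  rw [nclasses, ← Nat.card_eq_fintype_card]
  exact Nat.card_le_card_of_surjective (Quotient.mk s) (Quotient.mk_surjective)

lemma sum_group {α : Type*} [Fintype α] [Fintype (Setoid α)] (n : ℕ)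
    (hn : Fintype.card α ≤ n) (h : ℕ → ℕ) :
    ∑ s : Setoid α, h (nclasses s)
      = ∑ j ∈ range (n + 1), Nat.card {s : Setoid α // nclasses s = j} * h j := by
  classical
  rw [← Finset.sum_fiberwise_of_maps_to (g := nclasses) (t := range (n + 1))
    (fun s _ => by rw [mem_range, Nat.lt_succ_iff]; exact le_trans (nclasses_le s) hn)
    (fun s => h (nclasses s))]
  apply sum_congr rfl
  intro j _
  rw [Finset.sum_congr rfl (fun s hs => by rw [(mem_filter.1 hs).2]),
    Finset.sum_const, smul_eq_mul]
  congr 1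
  rw [Nat.card_eq_fintype_card, Fintype.card_subtype]

lemma card_setoid_sum (A B : Type*) [Fintype A] [Fintype B]
    [Fintype (Setoid A)] [Fintype (Setoid B)] :
    Nat.card (Setoid (A ⊕ B)) = ∑ sa : Setoid A, ∑ sb : Setoid B,
      ∑ k ∈ range (nclasses sa + 1),
        (nclasses sa).choose k * (nclasses sb).descFactorial k := by
  classical
  rw [card_eq_sum_fibers (fun r : Setoid (A ⊕ B) =>
    (Setoid.comap Sum.inl r, Setoid.comap Sum.inr r)), Fintype.sum_prod_type]
  refine Finset.sum_congr rfl (fun sa _ => Finset.sum_congr rfl (fun sb _ => ?_))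
  have e1 : {r : Setoid (A ⊕ B) //
      (Setoid.comap Sum.inl r, Setoid.comap Sum.inr r) = (sa, sb)} ≃ Fiber.F sa sb :=
    Equiv.subtypeEquivRight (fun r => by rw [Prod.mk.injEq])
  letI : Fintype (Quotient sa) := Fintype.ofFinite _
  letI : Fintype (Quotient sb) := Fintype.ofFinite _
  rw [Nat.card_congr (e1.trans Fiber.fiberEquiv), card_PB]
  simp only [← Nat.card_eq_fintype_card]
  rfl

/-! ### Final algebra -/

lemma algebra_step (n : ℕ) (st : ℕ → ℕ) :
    ∑ j1 ∈ range (n+1), st j1 * (∑ j2 ∈ range (n+1), st j2 *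
        ∑ k ∈ range (j1+1), (j1.choose k) * (j2.descFactorial k))
      = ∑ k ∈ range (n+1), k.factorial * (∑ j ∈ Icc k n, j.choose k * st j) ^ 2 := by
  have hS : ∀ k ∈ range (n+1), (∑ j ∈ Icc k n, j.choose k * st j)
      = ∑ j ∈ range (n+1), j.choose k * st j := by
    intro k _
    apply Finset.sum_subset
    · intro j hj; rw [mem_range, Nat.lt_succ_iff]; exact (mem_Icc.1 hj).2
    · intro j hj hj'
      rw [mem_range, Nat.lt_succ_iff] at hj
      have hlt : j < k := by
        by_contra h
        exact hj' (mem_Icc.2 ⟨not_lt.1 h, hj⟩)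
      rw [Nat.choose_eq_zero_of_lt hlt, zero_mul]
  have hext : ∀ j1 ∈ range (n+1),
      (∑ j2 ∈ range (n+1), st j2 * ∑ k ∈ range (j1+1), (j1.choose k) * (j2.descFactorial k))
      = ∑ j2 ∈ range (n+1), st j2 * ∑ k ∈ range (n+1), (j1.choose k) * (j2.descFactorial k) := by
    intro j1 hj1
    refine Finset.sum_congr rfl (fun j2 _ => ?_)
    congr 1
    apply Finset.sum_subset
    · exact range_subset_range.2 (Nat.succ_le_succ (Nat.lt_succ_iff.1 (mem_range.1 hj1)))
    · intro k _ hk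
      rw [Nat.choose_eq_zero_of_lt (Nat.lt_of_succ_le (not_lt.1 (fun h => hk (mem_range.2 h)))),
        zero_mul]
  calc
    ∑ j1 ∈ range (n+1), st j1 * (∑ j2 ∈ range (n+1), st j2 *
        ∑ k ∈ range (j1+1), (j1.choose k) * (j2.descFactorial k))
      = ∑ j1 ∈ range (n+1), st j1 * (∑ j2 ∈ range (n+1), st j2 *
        ∑ k ∈ range (n+1), (j1.choose k) * (j2.descFactorial k)) := by
        exact Finset.sum_congr rfl (fun j1 hj1 => by rw [hext j1 hj1])
    _ = ∑ j1 ∈ range (n+1), ∑ j2 ∈ range (n+1), ∑ k ∈ range (n+1),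
          st j1 * (st j2 * ((j1.choose k) * (j2.descFactorial k))) := by
        refine Finset.sum_congr rfl (fun j1 _ => ?_)
        rw [Finset.mul_sum]
        refine Finset.sum_congr rfl (fun j2 _ => ?_)
        rw [Finset.mul_sum, Finset.mul_sum]
    _ = ∑ j1 ∈ range (n+1), ∑ k ∈ range (n+1), ∑ j2 ∈ range (n+1),
          st j1 * (st j2 * ((j1.choose k) * (j2.descFactorial k))) :=
        Finset.sum_congr rfl (fun j1 _ => Finset.sum_comm)
    _ = ∑ k ∈ range (n+1), ∑ j1 ∈ range (n+1), ∑ j2 ∈ range (n+1),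
          st j1 * (st j2 * ((j1.choose k) * (j2.descFactorial k))) := Finset.sum_comm
    _ = ∑ k ∈ range (n+1), k.factorial * (∑ j ∈ range (n+1), j.choose k * st j) ^ 2 := by
        refine Finset.sum_congr rfl (fun k _ => ?_)
        rw [pow_two, Finset.sum_mul_sum, Finset.mul_sum]
        refine Finset.sum_congr rfl (fun j1 _ => ?_)
        rw [Finset.mul_sum]
        refine Finset.sum_congr rfl (fun j2 _ => ?_)
        rw [Nat.descFactorial_eq_factorial_mul_choose]
        ring
    _ = ∑ k ∈ range (n+1), k.factorial * (∑ j ∈ Icc k n, j.choose k * st j) ^ 2 := by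
        exact Finset.sum_congr rfl (fun k hk => by rw [hS k hk])

end BellAux

/-- `B(2n) = ∑_{k=0}^{n} k! · ( ∑_{j=k}^{n} C(j,k) · S(n,j) )²`. -/
theorem stmt2 (n : ℕ) :
    bell (2 * n)
      = ∑ k ∈ Finset.range (n + 1),
          k.factorial * (∑ j ∈ Finset.Icc k n, j.choose k * stirling n j) ^ 2 := by
  classical
  open Finset BellAux in
  letI : Fintype (Setoid (Fin n)) := Fintype.ofFinite _
  have e0 : Fin (2 * n) ≃ Fin n ⊕ Fin n :=
    (finCongr (two_mul n)).trans finSumFinEquiv.symm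
  have hst : ∀ j, Nat.card {s : Setoid (Fin n) // nclasses s = j} = stirling n j :=
    fun j => (stirling_eq n j).symm
  have h1 : bell (2 * n) = Nat.card (Setoid (Fin n ⊕ Fin n)) := by
    rw [bell, bell_eq, Nat.card_congr (setoidCongr e0)]
  rw [h1, card_setoid_sum]
  have h2 : ∀ sa : Setoid (Fin n),
      (∑ sb : Setoid (Fin n), ∑ k ∈ Finset.range (nclasses sa + 1),
        (nclasses sa).choose k * (nclasses sb).descFactorial k)
      = ∑ j2 ∈ Finset.range (n + 1), stirling n j2 *
          ∑ k ∈ Finset.range (nclasses sa + 1), (nclasses sa).choose k * j2.descFactorial k := by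
    intro sa
    rw [sum_group (α := Fin n) n (by simp)
      (fun j2 => ∑ k ∈ Finset.range (nclasses sa + 1),
        (nclasses sa).choose k * j2.descFactorial k)]
    exact Finset.sum_congr rfl (fun j _ => by rw [hst j])
  rw [Finset.sum_congr rfl (fun sa _ => h2 sa)]
  rw [sum_group (α := Fin n) n (by simp)
    (fun j1 => ∑ j2 ∈ Finset.range (n + 1), stirling n j2 *
      ∑ k ∈ Finset.range (j1 + 1), j1.choose k * j2.descFactorial k)]
  rw [Finset.sum_congr rfl (fun j _ => by rw [hst j])]
  exact BellAux.algebra_step n (stirling n)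
end

section
/- For all natural numbers n ≥ 2 and k ≥ 2, the number of set partitions of an n-element set into exactly k blocks all of odd cardinality satisfies the recurrence O(n,k) = O(n−2, k−2) + k² · O(n−2, k). -/
/-- `O(n,k)`: the number of set partitions of an `n`-element set into exactly `k` nonempty
blocks, each of odd cardinality. -/
noncomputable def oddStirling (n k : ℕ) : ℕ :=
  Nat.card {P : Finpartition (Finset.univ : Finset (Fin n)) //
    P.parts.card = k ∧ ∀ b ∈ P.parts, Odd b.card}

set_option linter.unusedSectionVars false
set_option linter.unusedVariables false
set_option maxHeartbeats 1000000

open Finset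
variable {α : Type*} [Fintype α] [DecidableEq α]

def IsPF (f : α → Finset α) : Prop := (∀ i, i ∈ f i) ∧ (∀ i j, i ∈ f j → f i = f j)

def pfCond (k : ℕ) (f : α → Finset α) : Prop :=
  IsPF f ∧ (univ.image f).card = k ∧ ∀ i, Odd (f i).card

noncomputable def pfCard (α : Type*) [Fintype α] [DecidableEq α] (k : ℕ) : ℕ :=
  Nat.card {f : α → Finset α // pfCond k f}

def pfToPartition (f : α → Finset α) (hf : IsPF f) :
    Finpartition (univ : Finset α) where
  parts := univ.image f
  supIndep := by
    rw [Finset.supIndep_iff_pairwiseDisjoint]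
    rintro t ht u hu htu
    simp only [coe_image, Set.mem_image] at ht hu
    obtain ⟨i, -, rfl⟩ := ht
    obtain ⟨j, -, rfl⟩ := hu
    show Disjoint (f i) (f j)
    rw [Finset.disjoint_left]
    intro x hxi hxj
    exact htu ((hf.2 x i hxi).symm.trans (hf.2 x j hxj))
  sup_parts := by
    apply le_antisymm
    · intro x _; exact mem_univ x
    · intro x _
      exact Finset.mem_sup.2 ⟨f x, mem_image_of_mem f (mem_univ x), hf.1 x⟩
  bot_notMem := by
    simp only [bot_eq_empty, mem_image]
    rintro ⟨i, -, hi⟩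
    exact absurd (hf.1 i) (by rw [hi]; simp)

lemma part_isPF (P : Finpartition (univ : Finset α)) : IsPF (P.part) := by
  constructor
  · intro i; exact P.mem_part (mem_univ i)
  · intro i j hij
    exact P.part_eq_of_mem (P.part_mem.2 (mem_univ j)) hij

lemma image_part (P : Finpartition (univ : Finset α)) : univ.image P.part = P.parts := by
  apply le_antisymm
  · intro t ht
    simp only [mem_image] at ht
    obtain ⟨i, -, rfl⟩ := ht
    exact P.part_mem.2 (mem_univ i)
  · intro t ht
    obtain ⟨x, hx, hx2⟩ := P.part_surjOn ht
    simp only [mem_image]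
    exact ⟨x, mem_univ x, hx2⟩

noncomputable def partEquiv (k : ℕ) :
    {P : Finpartition (Finset.univ : Finset α) // P.parts.card = k ∧ ∀ b ∈ P.parts, Odd b.card} ≃
    {f : α → Finset α // pfCond k f} where
  toFun P := ⟨fun i => P.1.part i, part_isPF P.1,
    by rw [image_part]; exact P.2.1,
    fun i => P.2.2 _ (P.1.part_mem.2 (mem_univ i))⟩
  invFun f := ⟨pfToPartition f.1 f.2.1,
    f.2.2.1,
    by
      intro b hb
      simp only [pfToPartition, mem_image] at hb
      obtain ⟨i, -, rfl⟩ := hb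
      exact f.2.2.2 i⟩
  left_inv P := by
    ext1
    apply Finpartition.ext
    show univ.image (P.1.part) = _
    rw [image_part]
  right_inv f := by
    ext1
    funext i
    show (pfToPartition f.1 f.2.1).part i = f.1 i
    exact Finpartition.part_eq_of_mem _ (mem_image_of_mem _ (mem_univ i)) (f.2.1.1 i)

lemma lemmaA (n k : ℕ) : oddStirling n k = pfCard (Fin n) k :=
  Nat.card_congr (partEquiv k)

lemma pfCond_map {β : Type*} [Fintype β] [DecidableEq β] (e : α ≃ β) (k : ℕ)
    (f : α → Finset α) (hf : pfCond k f) :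
    pfCond k (fun b => (f (e.symm b)).image e) := by
  obtain ⟨⟨h1, h2⟩, h3, h4⟩ := hf
  refine ⟨⟨?_, ?_⟩, ?_, ?_⟩
  · intro b
    exact mem_image.2 ⟨e.symm b, h1 _, e.apply_symm_apply b⟩
  · intro b c hbc
    simp only [mem_image] at hbc
    obtain ⟨x, hx, hxb⟩ := hbc
    have : x = e.symm b := by rw [← hxb, Equiv.symm_apply_apply]
    subst this
    simp only []
    rw [h2 _ _ hx]
  · have : (univ.image fun b => (f (e.symm b)).image e)
        = (univ.image f).image (fun s => s.image e) := by
      ext t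
      simp only [mem_image, mem_univ, true_and]
      constructor
      · rintro ⟨b, rfl⟩; exact ⟨f (e.symm b), ⟨e.symm b, rfl⟩, rfl⟩
      · rintro ⟨s, ⟨a, rfl⟩, rfl⟩; exact ⟨e a, by rw [Equiv.symm_apply_apply]⟩
    rw [this, Finset.card_image_of_injective _ (Finset.image_injective e.injective), h3]
  · intro b
    rw [Finset.card_image_of_injective _ e.injective]
    exact h4 _

lemma pfCard_congr {β : Type*} [Fintype β] [DecidableEq β] (e : α ≃ β) (k : ℕ) :
    pfCard α k = pfCard β k := by
  apply Nat.card_congr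
  refine ⟨fun f => ⟨fun b => (f.1 (e.symm b)).image e, pfCond_map e k f.1 f.2⟩,
          fun g => ⟨fun a => (g.1 (e a)).image e.symm, by
            have := pfCond_map e.symm k g.1 g.2
            simpa using this⟩, ?_, ?_⟩
  · intro f
    ext1
    funext a
    simp [Finset.image_image]
  · intro g
    ext1
    funext b
    simp [Finset.image_image]

/-! ### up / down between `Fin m` and `Fin m ⊕ Bool` -/

section UpDown
variable {m : ℕ}

def up (s : Finset (Fin m)) : Finset (Fin m ⊕ Bool) := s.map ⟨Sum.inl, Sum.inl_injective⟩

def down (t : Finset (Fin m ⊕ Bool)) : Finset (Fin m) := univ.filter (fun i => Sum.inl i ∈ t)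

@[simp] lemma mem_up {s : Finset (Fin m)} {i : Fin m} : Sum.inl i ∈ up s ↔ i ∈ s := by
  simp [up]

@[simp] lemma inr_not_mem_up {s : Finset (Fin m)} {c : Bool} : Sum.inr c ∉ up s := by
  simp [up]

@[simp] lemma mem_down {t : Finset (Fin m ⊕ Bool)} {i : Fin m} :
    i ∈ down t ↔ Sum.inl i ∈ t := by simp [down]

@[simp] lemma down_up (s : Finset (Fin m)) : down (up s) = s := by
  ext i; simp

lemma up_down (t : Finset (Fin m ⊕ Bool)) (h : ∀ c, Sum.inr c ∉ t) : up (down t) = t := by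
  ext x
  cases x with
  | inl i => simp
  | inr c => simp [h c]

@[simp] lemma card_up (s : Finset (Fin m)) : (up s).card = s.card := Finset.card_map _

lemma up_injective : Function.Injective (up (m := m)) := Finset.map_injective _

lemma down_subset_down {t u : Finset (Fin m ⊕ Bool)} (h : t ⊆ u) : down t ⊆ down u := by
  intro i hi; simp only [mem_down] at *; exact h hi

lemma disjoint_down {t u : Finset (Fin m ⊕ Bool)} (h : Disjoint t u) :
    Disjoint (down t) (down u) := by
  rw [Finset.disjoint_left] at h ⊢
  intro i hi hi'
  exact h (mem_down.1 hi) (mem_down.1 hi')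

lemma up_down_eq_filter (t : Finset (Fin m ⊕ Bool)) :
    up (down t) = t.filter (fun x => x.isLeft) := by
  ext x
  cases x with
  | inl i => simp
  | inr c => simp

end UpDown

/-! ### the toggle operation -/

section Tog
variable {m : ℕ}

def tog (X Y : Finset (Fin m)) : Finset (Fin m) × Finset (Fin m) :=
  if h : (X ∪ Y).Nonempty then
    let s := (X ∪ Y).max' h
    if s ∈ X then (X.erase s, insert s Y) else (insert s X, Y.erase s)
  else (X, Y)

lemma max'_congr' {γ : Type*} [LinearOrder γ] {s t : Finset γ} (h : s = t) (hs : s.Nonempty)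
    (ht : t.Nonempty) : s.max' hs = t.max' ht := by subst h; rfl

lemma tog_union {X Y : Finset (Fin m)} (h : (X ∪ Y).Nonempty) :
    (tog X Y).1 ∪ (tog X Y).2 = X ∪ Y := by
  rw [tog, dif_pos h]
  set s := (X ∪ Y).max' h with hs
  have hsm : s ∈ X ∪ Y := Finset.max'_mem _ h
  simp only []
  split_ifs with h1
  · ext x
    simp only [Finset.mem_union, Finset.mem_erase, Finset.mem_insert]
    constructor
    · rintro (⟨-, hx⟩ | (rfl | hx)) <;> tauto
    · rintro (hx | hx)
      · by_cases hxs : x = s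
        · tauto
        · tauto
      · tauto
  · have h2 : s ∈ Y := by rcases Finset.mem_union.1 hsm with h' | h' <;> tauto
    ext x
    simp only [Finset.mem_union, Finset.mem_erase, Finset.mem_insert]
    constructor
    · rintro ((rfl | hx) | ⟨-, hx⟩) <;> tauto
    · rintro (hx | hx)
      · tauto
      · by_cases hxs : x = s <;> tauto

lemma tog_spec {X Y : Finset (Fin m)} (h : (X ∪ Y).Nonempty) :
    ((X ∪ Y).max' h ∈ X ∧ tog X Y = (X.erase ((X ∪ Y).max' h), insert ((X ∪ Y).max' h) Y)) ∨
    ((X ∪ Y).max' h ∉ X ∧ (X ∪ Y).max' h ∈ Y ∧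
      tog X Y = (insert ((X ∪ Y).max' h) X, Y.erase ((X ∪ Y).max' h))) := by
  have hsm := Finset.max'_mem _ h
  rw [tog, dif_pos h]
  simp only []
  split_ifs with h1
  · exact Or.inl ⟨h1, rfl⟩
  · refine Or.inr ⟨h1, ?_, rfl⟩
    rcases Finset.mem_union.1 hsm with h' | h' <;> tauto

lemma tog_disjoint {X Y : Finset (Fin m)} (hd : Disjoint X Y) :
    Disjoint (tog X Y).1 (tog X Y).2 := by
  by_cases h : (X ∪ Y).Nonempty
  · rw [Finset.disjoint_left] at hd
    rcases tog_spec h with ⟨hs, he⟩ | ⟨hs, hs2, he⟩ <;> rw [he] <;>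
        rw [Finset.disjoint_left] <;> intro x hx hx'
    · simp only [Finset.mem_erase, Finset.mem_insert] at hx hx'
      rcases hx' with rfl | hx'
      · exact hx.1 rfl
      · exact hd hx.2 hx'
    · simp only [Finset.mem_erase, Finset.mem_insert] at hx hx'
      rcases hx with rfl | hx
      · exact hx'.1 rfl
      · exact hd hx hx'.2
  · rw [tog, dif_neg h]; exact hd

lemma tog_tog {X Y : Finset (Fin m)} (hd : Disjoint X Y) (h : (X ∪ Y).Nonempty) :
    tog (tog X Y).1 (tog X Y).2 = (X, Y) := by
  have hu : (tog X Y).1 ∪ (tog X Y).2 = X ∪ Y := tog_union h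
  have h' : ((tog X Y).1 ∪ (tog X Y).2).Nonempty := by rw [hu]; exact h
  have hm : ((tog X Y).1 ∪ (tog X Y).2).max' h' = (X ∪ Y).max' h := max'_congr' hu h' h
  rw [Finset.disjoint_left] at hd
  rcases tog_spec h with ⟨hs, he⟩ | ⟨hsX, hsY, he⟩
  · rcases tog_spec h' with ⟨hs1, he1⟩ | ⟨hs1, hs2, he1⟩
    · exfalso
      rw [hm, he] at hs1
      exact Finset.notMem_erase _ _ hs1
    · rw [he1, hm, he]
      have hsy : (X ∪ Y).max' h ∉ Y := fun hy => hd hs hy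
      simp only []
      rw [Finset.insert_erase hs, Finset.erase_insert hsy]
  · rcases tog_spec h' with ⟨hs1, he1⟩ | ⟨hs1, hs2, he1⟩
    · rw [he1, hm, he]
      simp only []
      rw [Finset.erase_insert hsX, Finset.insert_erase hsY]
    · exfalso
      rw [hm, he] at hs1
      exact hs1 (Finset.mem_insert_self _ _)

lemma tog_card_odd {X Y : Finset (Fin m)} (hd : Disjoint X Y) (h : (X ∪ Y).Nonempty)
    (hX : Even X.card) (hY : Even Y.card) :
    Odd (tog X Y).1.card ∧ Odd (tog X Y).2.card := by
  rw [Finset.disjoint_left] at hd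
  rcases tog_spec h with ⟨hs, he⟩ | ⟨hsX, hsY, he⟩
  · rw [he]
    constructor
    · simp only [Finset.card_erase_of_mem hs]
      exact Nat.Even.sub_odd (Finset.card_pos.2 ⟨_, hs⟩) hX odd_one
    · simp only []
      rw [Finset.card_insert_of_notMem (fun hy => hd hs hy)]
      exact hY.add_one
  · rw [he]
    constructor
    · simp only []
      rw [Finset.card_insert_of_notMem hsX]
      exact hX.add_one
    · simp only [Finset.card_erase_of_mem hsY]
      exact Nat.Even.sub_odd (Finset.card_pos.2 ⟨_, hsY⟩) hY odd_one

lemma tog_card_even {X Y : Finset (Fin m)} (hd : Disjoint X Y) (h : (X ∪ Y).Nonempty)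
    (hX : Odd X.card) (hY : Odd Y.card) :
    Even (tog X Y).1.card ∧ Even (tog X Y).2.card := by
  rw [Finset.disjoint_left] at hd
  rcases tog_spec h with ⟨hs, he⟩ | ⟨hsX, hsY, he⟩
  · rw [he]
    constructor
    · simp only [Finset.card_erase_of_mem hs]
      exact Nat.Odd.sub_odd hX odd_one
    · simp only []
      rw [Finset.card_insert_of_notMem (fun hy => hd hs hy)]
      exact hY.add_one
  · rw [he]
    constructor
    · simp only []
      rw [Finset.card_insert_of_notMem hsX]
      exact hX.add_one
    · simp only [Finset.card_erase_of_mem hsY]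
      exact Nat.Odd.sub_odd hY odd_one

end Tog

/-! ### IsPF helpers -/

section PFhelp
variable {α : Type*} [Fintype α] [DecidableEq α] {f : α → Finset α}

lemma IsPF.mem_iff (hf : IsPF f) {i j : α} : i ∈ f j ↔ f i = f j :=
  ⟨fun h => hf.2 i j h, fun h => h ▸ hf.1 i⟩

lemma IsPF.disjoint (hf : IsPF f) {i j : α} (h : f i ≠ f j) : Disjoint (f i) (f j) := by
  rw [Finset.disjoint_left]
  intro x hx hx'
  exact h (((hf.mem_iff).1 hx).symm.trans ((hf.mem_iff).1 hx'))

lemma IsPF.nonempty (hf : IsPF f) (i : α) : (f i).Nonempty := ⟨i, hf.1 i⟩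

lemma mem_image_univ_iff {t : Finset α} : t ∈ univ.image f ↔ ∃ i, f i = t := by
  simp [eq_comm]

end PFhelp

/-! ### the six constructions -/

section Main
variable {m : ℕ}

def fdown (f : Fin m ⊕ Bool → Finset (Fin m ⊕ Bool)) : Fin m → Finset (Fin m) :=
  fun i => down (f (Sum.inl i))

def fdiff (f : Fin m ⊕ Bool → Finset (Fin m ⊕ Bool)) : Fin m → Finset (Fin m) :=
  fun i =>
    if i ∈ (tog (down (f (Sum.inr true))) (down (f (Sum.inr false)))).1 then
      (tog (down (f (Sum.inr true))) (down (f (Sum.inr false)))).1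
    else if i ∈ (tog (down (f (Sum.inr true))) (down (f (Sum.inr false)))).2 then
      (tog (down (f (Sum.inr true))) (down (f (Sum.inr false)))).2
    else down (f (Sum.inl i))

def bsing (g : Fin m → Finset (Fin m)) : Fin m ⊕ Bool → Finset (Fin m ⊕ Bool) :=
  Sum.elim (fun i => up (g i)) (fun c => {Sum.inr c})

def bsame (g : Fin m → Finset (Fin m)) (C : Finset (Fin m)) :
    Fin m ⊕ Bool → Finset (Fin m ⊕ Bool) :=
  Sum.elim
    (fun i => if i ∈ C then insert (Sum.inr true) (insert (Sum.inr false) (up C))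
              else up (g i))
    (fun _ => insert (Sum.inr true) (insert (Sum.inr false) (up C)))

def bdiff (g : Fin m → Finset (Fin m)) (C D : Finset (Fin m)) :
    Fin m ⊕ Bool → Finset (Fin m ⊕ Bool) :=
  Sum.elim
    (fun i => if i ∈ (tog C D).1 then insert (Sum.inr true) (up (tog C D).1)
              else if i ∈ (tog C D).2 then insert (Sum.inr false) (up (tog C D).2)
              else up (g i))
    (fun c => if c then insert (Sum.inr true) (up (tog C D).1)
              else insert (Sum.inr false) (up (tog C D).2))

end Main

section Counting
variable {m k : ℕ}

lemma image_sum_elim {γ δ ε : Type*} [Fintype γ] [Fintype δ] [DecidableEq ε]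
    (F : γ → ε) (G : δ → ε) :
    univ.image (Sum.elim F G) = univ.image F ∪ univ.image G := by
  ext x
  simp only [mem_image, mem_union, mem_univ, true_and]
  constructor
  · rintro ⟨(i | c), h⟩
    · exact Or.inl ⟨i, h⟩
    · exact Or.inr ⟨c, h⟩
  · rintro (⟨i, h⟩ | ⟨c, h⟩)
    · exact ⟨Sum.inl i, h⟩
    · exact ⟨Sum.inr c, h⟩

lemma image_bool {ε : Type*} [DecidableEq ε] (G : Bool → ε) :
    univ.image G = {G true, G false} := by
  ext x
  simp only [mem_image, mem_univ, true_and, mem_insert, mem_singleton]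
  constructor
  · rintro ⟨(_|_), rfl⟩ <;> tauto
  · rintro (rfl | rfl)
    exacts [⟨true, rfl⟩, ⟨false, rfl⟩]

/-! ### bsing -/

variable {g : Fin m → Finset (Fin m)}

lemma bsing_isPF (hg : IsPF g) : IsPF (bsing g) := by
  constructor
  · rintro (i | c)
    · exact mem_up.2 (hg.1 i)
    · simp [bsing]
  · rintro (i | c) (j | c') hx
    · simp only [bsing, Sum.elim_inl, mem_up] at hx ⊢
      rw [hg.2 i j hx]
    · simp only [bsing, Sum.elim_inr, mem_singleton] at hx
      cases hx
    · simp only [bsing, Sum.elim_inl, Sum.elim_inr] at hx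
      exact absurd hx inr_not_mem_up
    · simp only [bsing, Sum.elim_inr, mem_singleton] at hx ⊢
      rw [hx]

lemma bsing_image :
    univ.image (bsing g) =
      insert {(Sum.inr true : Fin m ⊕ Bool)} (insert {Sum.inr false}
        ((univ.image g).image up)) := by
  rw [bsing, image_sum_elim, image_bool]
  rw [Finset.image_image]
  ext t
  simp only [mem_union, mem_insert, mem_image, mem_univ, true_and, Function.comp,
    mem_singleton]
  tauto

lemma bsing_pfCond (hk : 2 ≤ k) (hg : pfCond (k - 2) g) : pfCond k (bsing g) := by
  refine ⟨bsing_isPF hg.1, ?_, ?_⟩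
  · rw [bsing_image]
    have h1 : ({(Sum.inr true : Fin m ⊕ Bool)} : Finset _) ∉
        insert {(Sum.inr false : Fin m ⊕ Bool)} ((univ.image g).image up) := by
      simp only [mem_insert, mem_image]
      rintro (h | ⟨s, -, h⟩)
      · have := Finset.mem_singleton_self (Sum.inr true : Fin m ⊕ Bool)
        rw [h] at this
        simp at this
      · have := Finset.mem_singleton_self (Sum.inr true : Fin m ⊕ Bool)
        rw [← h] at this
        exact inr_not_mem_up this
    have h2 : ({(Sum.inr false : Fin m ⊕ Bool)} : Finset _) ∉ (univ.image g).image up := by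
      simp only [mem_image]
      rintro ⟨s, -, h⟩
      have := Finset.mem_singleton_self (Sum.inr false : Fin m ⊕ Bool)
      rw [← h] at this
      exact inr_not_mem_up this
    rw [Finset.card_insert_of_notMem h1, Finset.card_insert_of_notMem h2,
      Finset.card_image_of_injective _ up_injective, hg.2.1]
    omega
  · rintro (i | c)
    · simp only [bsing, Sum.elim_inl, card_up]
      exact hg.2.2 i
    · simp [bsing]


/-! ### bsame -/

lemma block_eq_of_mem (hg : IsPF g) {C : Finset (Fin m)} (hC : C ∈ univ.image g) {i : Fin m}
    (hi : i ∈ C) : g i = C := by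
  obtain ⟨i₀, -, rfl⟩ := mem_image.1 hC
  exact hg.2 i i₀ hi

lemma down_bsame_big {C : Finset (Fin m)} :
    down (insert (Sum.inr true) (insert (Sum.inr false) (up C))) = C := by
  ext j
  simp

lemma bsame_isPF (hg : IsPF g) {C : Finset (Fin m)} (hC : C ∈ univ.image g) :
    IsPF (bsame g C) := by
  set Big := insert (Sum.inr true : Fin m ⊕ Bool) (insert (Sum.inr false) (up C)) with hBig
  constructor
  · rintro (i | c)
    · simp only [bsame, Sum.elim_inl]
      split_ifs with hi
      · exact mem_insert_of_mem (mem_insert_of_mem (mem_up.2 hi))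
      · exact mem_up.2 (hg.1 i)
    · simp only [bsame, Sum.elim_inr, ← hBig]
      cases c <;> simp [hBig]
  · have key : ∀ x, x ∈ Big → bsame g C x = Big := by
      rintro (i | c) hx
      · simp only [hBig, mem_insert] at hx
        rcases hx with h | h | h
        · cases h
        · cases h
        · simp only [bsame, Sum.elim_inl, if_pos (mem_up.1 h), ← hBig]
      · simp [bsame, hBig]
    rintro x (j | c') hx
    · simp only [bsame, Sum.elim_inl] at hx
      split_ifs at hx with hj
      · rw [key x hx]
        simp only [bsame, Sum.elim_inl, if_pos hj, hBig]
      · -- x ∈ up (g j), g j ≠ C-block case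
        obtain ⟨i, rfl⟩ : ∃ i, x = Sum.inl i := by
          cases x with
          | inl i => exact ⟨i, rfl⟩
          | inr c => exact absurd hx inr_not_mem_up
        have hij : g i = g j := hg.2 i j (mem_up.1 hx)
        have hiC : i ∉ C := by
          intro hiC
          exact hj (by rw [← block_eq_of_mem hg hC hiC, hij]; exact hg.1 j)
        simp only [bsame, Sum.elim_inl, if_neg hiC, if_neg hj, hij]
    · rw [key x (by rw [hBig]; simpa [bsame] using hx)]
      simp [bsame, hBig]

lemma bsame_image (hg : IsPF g) {C : Finset (Fin m)} (hC : C ∈ univ.image g) :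
    univ.image (bsame g C) =
      insert (insert (Sum.inr true) (insert (Sum.inr false) (up C)))
        (((univ.image g).erase C).image up) := by
  ext t
  simp only [mem_image, mem_univ, true_and, mem_insert, mem_erase]
  constructor
  · rintro ⟨(i | c), rfl⟩
    · simp only [bsame, Sum.elim_inl]
      split_ifs with hi
      · left; rfl
      · right
        refine ⟨g i, ⟨⟨fun h => hi (h ▸ hg.1 i), ⟨i, rfl⟩⟩, rfl⟩⟩
    · left; simp [bsame]
  · rintro (rfl | ⟨s, ⟨⟨hsC, hs⟩, rfl⟩⟩)
    · exact ⟨Sum.inr true, rfl⟩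
    · obtain ⟨i, rfl⟩ := hs
      refine ⟨Sum.inl i, ?_⟩
      simp only [bsame, Sum.elim_inl]
      rw [if_neg (fun hiC => hsC (hg.2 i i (hg.1 i) ▸ block_eq_of_mem hg hC hiC))]
    
lemma bsame_pfCond (hg : IsPF g) {C : Finset (Fin m)} (hC : C ∈ univ.image g)
    (hcard : (univ.image g).card = k) (hodd : ∀ i, Odd (g i).card) :
    pfCond k (bsame g C) := by
  refine ⟨bsame_isPF hg hC, ?_, ?_⟩
  · rw [bsame_image hg hC]
    have hBig : (insert (Sum.inr true : Fin m ⊕ Bool) (insert (Sum.inr false) (up C))) ∉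
        ((univ.image g).erase C).image up := by
      simp only [mem_image]
      rintro ⟨s, -, h⟩
      have : (Sum.inr true : Fin m ⊕ Bool) ∈ up s := by rw [h]; simp
      exact inr_not_mem_up this
    rw [Finset.card_insert_of_notMem hBig,
      Finset.card_image_of_injective _ up_injective,
      Finset.card_erase_of_mem hC, hcard]
    have : 1 ≤ k := by
      rw [← hcard]
      exact Finset.card_pos.2 ⟨C, hC⟩
    omega
  · rintro (i | c)
    · simp only [bsame, Sum.elim_inl]
      split_ifs with hi
      · rw [Finset.card_insert_of_notMem (by simp),
          Finset.card_insert_of_notMem (by simp), card_up]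
        have : Odd C.card := by
          rw [← block_eq_of_mem hg hC hi]; exact hodd i
        rcases this with ⟨r, hr⟩
        exact ⟨r + 1, by omega⟩
      · rw [card_up]; exact hodd i
    · simp only [bsame, Sum.elim_inr]
      rw [Finset.card_insert_of_notMem (by simp),
        Finset.card_insert_of_notMem (by simp), card_up]
      have : Odd C.card := by
        obtain ⟨i₀, -, rfl⟩ := mem_image.1 hC
        exact hodd i₀
      rcases this with ⟨r, hr⟩
      exact ⟨r + 1, by omega⟩

lemma bsame_fdown (hg : IsPF g) {C : Finset (Fin m)} (hC : C ∈ univ.image g) :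
    fdown (bsame g C) = g := by
  funext i
  simp only [fdown, bsame, Sum.elim_inl]
  split_ifs with hi
  · rw [down_bsame_big, block_eq_of_mem hg hC hi]
  · rw [down_up]


/-! ### bdiff -/

variable {C D : Finset (Fin m)}

lemma blocks_disjoint (hg : IsPF g) (hC : C ∈ univ.image g) (hD : D ∈ univ.image g)
    (hCD : C ≠ D) : Disjoint C D := by
  obtain ⟨i₀, -, rfl⟩ := mem_image.1 hC
  obtain ⟨j₀, -, rfl⟩ := mem_image.1 hD
  exact hg.disjoint hCD

lemma block_nonempty (hg : IsPF g) (hC : C ∈ univ.image g) : C.Nonempty := by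
  obtain ⟨i₀, -, rfl⟩ := mem_image.1 hC
  exact hg.nonempty i₀

lemma union_nonempty' (hg : IsPF g) (hC : C ∈ univ.image g) : (C ∪ D).Nonempty := by
  obtain ⟨x, hx⟩ := block_nonempty hg hC
  exact ⟨x, Finset.mem_union_left _ hx⟩

section BDiff
variable (hg : IsPF g) (hC : C ∈ univ.image g) (hD : D ∈ univ.image g) (hCD : C ≠ D)

include hg hC hD hCD

lemma tog_mem_union {i : Fin m} (hi : i ∈ (tog C D).1 ∨ i ∈ (tog C D).2) : i ∈ C ∪ D := by
  rw [← tog_union (union_nonempty' hg hC)]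
  rcases hi with h | h
  · exact Finset.mem_union_left _ h
  · exact Finset.mem_union_right _ h

lemma not_mem_tog {i : Fin m} (h1 : i ∉ (tog C D).1) (h2 : i ∉ (tog C D).2) :
    g i ≠ C ∧ g i ≠ D := by
  have hi : i ∉ C ∪ D := by
    rw [← tog_union (union_nonempty' hg hC), Finset.mem_union]
    tauto
  rw [Finset.mem_union] at hi
  constructor
  · intro h; exact hi (Or.inl (h ▸ hg.1 i))
  · intro h; exact hi (Or.inr (h ▸ hg.1 i))

lemma bdiff_keyA {x : Fin m ⊕ Bool} (hx : x ∈ insert (Sum.inr true) (up (tog C D).1)) :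
    bdiff g C D x = insert (Sum.inr true) (up (tog C D).1) := by
  rcases x with i | c
  · have hi : i ∈ (tog C D).1 := by
      rcases mem_insert.1 hx with h | h
      · cases h
      · exact mem_up.1 h
    simp [bdiff, hi]
  · have : c = true := by
      rcases mem_insert.1 hx with h | h
      · cases h; rfl
      · exact absurd h inr_not_mem_up
    subst this
    simp [bdiff]

lemma bdiff_keyB {x : Fin m ⊕ Bool} (hx : x ∈ insert (Sum.inr false) (up (tog C D).2)) :
    bdiff g C D x = insert (Sum.inr false) (up (tog C D).2) := by
  have hdisj : Disjoint (tog C D).1 (tog C D).2 :=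
    tog_disjoint (blocks_disjoint hg hC hD hCD)
  rcases x with i | c
  · have hi : i ∈ (tog C D).2 := by
      rcases mem_insert.1 hx with h | h
      · cases h
      · exact mem_up.1 h
    have hi1 : i ∉ (tog C D).1 := Finset.disjoint_right.1 hdisj hi
    simp [bdiff, hi, hi1]
  · have : c = false := by
      rcases mem_insert.1 hx with h | h
      · cases h; rfl
      · exact absurd h inr_not_mem_up
    subst this
    simp [bdiff]

lemma bdiff_isPF : IsPF (bdiff g C D) := by
  constructor
  · rintro (i | c)
    · simp only [bdiff, Sum.elim_inl]
      split_ifs with h1 h2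
      · exact mem_insert_of_mem (mem_up.2 h1)
      · exact mem_insert_of_mem (mem_up.2 h2)
      · exact mem_up.2 (hg.1 i)
    · cases c <;> simp [bdiff]
  · rintro x (j | c') hx
    · simp only [bdiff, Sum.elim_inl] at hx
      split_ifs at hx with h1 h2
      · rw [bdiff_keyA hg hC hD hCD hx]
        simp [bdiff, h1]
      · rw [bdiff_keyB hg hC hD hCD hx]
        simp [bdiff, h1, h2]
      · obtain ⟨i, rfl⟩ : ∃ i, x = Sum.inl i := by
          cases x with
          | inl i => exact ⟨i, rfl⟩
          | inr c => exact absurd hx inr_not_mem_up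
        have hij : g i = g j := hg.2 i j (mem_up.1 hx)
        have hjCD := not_mem_tog hg hC hD hCD h1 h2
        have hi1 : i ∉ (tog C D).1 ∧ i ∉ (tog C D).2 := by
          constructor <;> intro hmem <;>
            rcases Finset.mem_union.1 (tog_mem_union hg hC hD hCD (by tauto)) with h | h
          · exact hjCD.1 (by rw [← hij]; exact (hg.2 i i (hg.1 i) ▸ block_eq_of_mem hg hC h))
          · exact hjCD.2 (by rw [← hij]; exact (hg.2 i i (hg.1 i) ▸ block_eq_of_mem hg hD h))
          · exact hjCD.1 (by rw [← hij]; exact (hg.2 i i (hg.1 i) ▸ block_eq_of_mem hg hC h))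
          · exact hjCD.2 (by rw [← hij]; exact (hg.2 i i (hg.1 i) ▸ block_eq_of_mem hg hD h))
        simp only [bdiff, Sum.elim_inl, if_neg hi1.1, if_neg hi1.2, if_neg h1, if_neg h2, hij]
    · cases c'
      · rw [bdiff_keyB hg hC hD hCD (by simpa [bdiff] using hx)]
        simp [bdiff]
      · rw [bdiff_keyA hg hC hD hCD (by simpa [bdiff] using hx)]
        simp [bdiff]


lemma bdiff_image :
    univ.image (bdiff g C D) =
      insert (insert (Sum.inr true) (up (tog C D).1))
        (insert (insert (Sum.inr false) (up (tog C D).2))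
          ((((univ.image g).erase C).erase D).image up)) := by
  ext t
  simp only [mem_image, mem_univ, true_and, mem_insert, mem_erase]
  constructor
  · rintro ⟨(i | c), rfl⟩
    · simp only [bdiff, Sum.elim_inl]
      split_ifs with h1 h2
      · tauto
      · tauto
      · right; right
        have hne := not_mem_tog hg hC hD hCD h1 h2
        exact ⟨g i, ⟨⟨hne.2, hne.1, ⟨i, rfl⟩⟩, rfl⟩⟩
    · cases c
      · right; left; simp [bdiff]
      · left; simp [bdiff]
  · rintro (rfl | rfl | ⟨s, ⟨⟨hsD, hsC, hs⟩, rfl⟩⟩)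
    · exact ⟨Sum.inr true, by simp [bdiff]⟩
    · exact ⟨Sum.inr false, by simp [bdiff]⟩
    · obtain ⟨i, rfl⟩ := hs
      refine ⟨Sum.inl i, ?_⟩
      have hi1 : i ∉ (tog C D).1 := by
        intro hmem
        rcases Finset.mem_union.1 (tog_mem_union hg hC hD hCD (Or.inl hmem)) with h | h
        · exact hsC (block_eq_of_mem hg hC h)
        · exact hsD (block_eq_of_mem hg hD h)
      have hi2 : i ∉ (tog C D).2 := by
        intro hmem
        rcases Finset.mem_union.1 (tog_mem_union hg hC hD hCD (Or.inr hmem)) with h | h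
        · exact hsC (block_eq_of_mem hg hC h)
        · exact hsD (block_eq_of_mem hg hD h)
      simp [bdiff, hi1, hi2]

lemma bdiff_pfCond (hcard : (univ.image g).card = k) (hodd : ∀ i, Odd (g i).card) :
    pfCond k (bdiff g C D) := by
  have hdisj : Disjoint C D := blocks_disjoint hg hC hD hCD
  have hune : (C ∪ D).Nonempty := union_nonempty' hg hC
  have hoddC : Odd C.card := by
    obtain ⟨i₀, -, rfl⟩ := mem_image.1 hC; exact hodd i₀
  have hoddD : Odd D.card := by
    obtain ⟨i₀, -, rfl⟩ := mem_image.1 hD; exact hodd i₀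
  have heven := tog_card_even hdisj hune hoddC hoddD
  refine ⟨bdiff_isPF hg hC hD hCD, ?_, ?_⟩
  · rw [bdiff_image hg hC hD hCD]
    have hAB : insert (Sum.inr true : Fin m ⊕ Bool) (up (tog C D).1) ≠
        insert (Sum.inr false) (up (tog C D).2) := by
      intro h
      have : (Sum.inr true : Fin m ⊕ Bool) ∈ insert (Sum.inr false) (up (tog C D).2) := by
        rw [← h]; exact mem_insert_self _ _
      rcases mem_insert.1 this with h' | h'
      · cases h'
      · exact inr_not_mem_up h'
    have hA : insert (Sum.inr true : Fin m ⊕ Bool) (up (tog C D).1) ∉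
        (((univ.image g).erase C).erase D).image up := by
      simp only [mem_image]
      rintro ⟨s, -, h⟩
      have : (Sum.inr true : Fin m ⊕ Bool) ∈ up s := by rw [h]; exact mem_insert_self _ _
      exact inr_not_mem_up this
    have hB : insert (Sum.inr false : Fin m ⊕ Bool) (up (tog C D).2) ∉
        (((univ.image g).erase C).erase D).image up := by
      simp only [mem_image]
      rintro ⟨s, -, h⟩
      have : (Sum.inr false : Fin m ⊕ Bool) ∈ up s := by rw [h]; exact mem_insert_self _ _
      exact inr_not_mem_up this
    rw [Finset.card_insert_of_notMem (by simp [hAB, hA]),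
      Finset.card_insert_of_notMem hB,
      Finset.card_image_of_injective _ up_injective,
      Finset.card_erase_of_mem (Finset.mem_erase.2 ⟨hCD.symm, hD⟩),
      Finset.card_erase_of_mem hC, hcard]
    have h2 : 2 ≤ k := by
      rw [← hcard]
      exact Finset.one_lt_card.2 ⟨C, hC, D, hD, hCD⟩
    omega
  · rintro (i | c)
    · simp only [bdiff, Sum.elim_inl]
      split_ifs with h1 h2
      · rw [Finset.card_insert_of_notMem (by simp), card_up]
        exact heven.1.add_one
      · rw [Finset.card_insert_of_notMem (by simp), card_up]
        exact heven.2.add_one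
      · rw [card_up]; exact hodd i
    · cases c
      · simp only [bdiff, Sum.elim_inr, Bool.false_eq_true, if_false]
        rw [Finset.card_insert_of_notMem (by simp), card_up]
        exact heven.2.add_one
      · simp only [bdiff, Sum.elim_inr, if_true]
        rw [Finset.card_insert_of_notMem (by simp), card_up]
        exact heven.1.add_one

omit hg hC hD hCD in
lemma down_insert_inr_up {c : Bool} (s : Finset (Fin m)) :
    down (insert (Sum.inr c) (up s)) = s := by
  ext j; simp

omit hg hC hD hCD in
lemma bdiff_ab : bdiff g C D (Sum.inr true) = insert (Sum.inr true) (up (tog C D).1) ∧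
    bdiff g C D (Sum.inr false) = insert (Sum.inr false) (up (tog C D).2) := by
  constructor <;> simp [bdiff]

lemma bdiff_tog_recover :
    tog (down (bdiff g C D (Sum.inr true))) (down (bdiff g C D (Sum.inr false))) = (C, D) := by
  rw [(bdiff_ab).1, (bdiff_ab).2, down_insert_inr_up, down_insert_inr_up]
  exact tog_tog (blocks_disjoint hg hC hD hCD) (union_nonempty' hg hC)

lemma bdiff_fdiff : fdiff (bdiff g C D) = g := by
  have hrec := bdiff_tog_recover hg hC hD hCD
  funext i
  simp only [fdiff, hrec]
  by_cases h1 : i ∈ C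
  · simp only [if_pos h1]
    exact (block_eq_of_mem hg hC h1).symm
  · simp only [if_neg h1]
    by_cases h2 : i ∈ D
    · simp only [if_pos h2]
      exact (block_eq_of_mem hg hD h2).symm
    · simp only [if_neg h2]
      have hi1 : i ∉ (tog C D).1 := by
        intro hmem
        rcases Finset.mem_union.1 (tog_mem_union hg hC hD hCD (Or.inl hmem)) with h | h <;> tauto
      have hi2 : i ∉ (tog C D).2 := by
        intro hmem
        rcases Finset.mem_union.1 (tog_mem_union hg hC hD hCD (Or.inr hmem)) with h | h <;> tauto
      simp [bdiff, hi1, hi2]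

end BDiff


/-! ### forward, case 1 -/

section Fwd
variable {f : Fin m ⊕ Bool → Finset (Fin m ⊕ Bool)} (hf : IsPF f)

include hf

lemma fdown_isPF : IsPF (fdown f) := by
  constructor
  · intro i
    exact mem_down.2 (hf.1 (Sum.inl i))
  · intro i j hij
    simp only [fdown, mem_down] at hij ⊢
    rw [hf.2 _ _ hij]

section Case1
variable (h1 : f (Sum.inr true) = {Sum.inr true}) (h2 : f (Sum.inr false) = {Sum.inr false})
include h1 h2

lemma case1_no_inr (i : Fin m) (c : Bool) : Sum.inr c ∉ f (Sum.inl i) := by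
  intro hc
  have := hf.2 _ _ hc
  cases c
  · rw [h2] at this
    have h3 := hf.1 (Sum.inl i)
    rw [← this] at h3
    simp at h3
  · rw [h1] at this
    have h3 := hf.1 (Sum.inl i)
    rw [← this] at h3
    simp at h3

lemma case1_up_down (i : Fin m) : up (fdown f i) = f (Sum.inl i) :=
  up_down _ (fun c => case1_no_inr hf h1 h2 i c)

lemma case1_image :
    univ.image (fun i => up (fdown f i)) =
      ((univ.image f).erase {Sum.inr true}).erase {Sum.inr false} := by
  ext t
  simp only [mem_image, mem_univ, true_and, mem_erase]
  constructor
  · rintro ⟨i, rfl⟩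
    rw [case1_up_down hf h1 h2]
    refine ⟨?_, ?_, ⟨Sum.inl i, rfl⟩⟩
    · intro h
      have := hf.1 (Sum.inl i)
      rw [h] at this
      simp at this
    · intro h
      have := hf.1 (Sum.inl i)
      rw [h] at this
      simp at this
  · rintro ⟨ht2, ht1, x, rfl⟩
    cases x with
    | inl i => exact ⟨i, case1_up_down hf h1 h2 i⟩
    | inr c =>
      exfalso
      cases c
      · exact ht2 h2
      · exact ht1 h1

lemma case1_pfCond (hcard : (univ.image f).card = k) (hodd : ∀ x, Odd (f x).card) :
    pfCond (k - 2) (fdown f) := by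
  refine ⟨fdown_isPF hf, ?_, ?_⟩
  · have : univ.image (fun i => up (fdown f i)) = (univ.image (fdown f)).image up := by
      rw [Finset.image_image]; rfl
    have hc : ((univ.image f).erase {(Sum.inr true : Fin m ⊕ Bool)}).card = k - 1 := by
      rw [Finset.card_erase_of_mem (mem_image_univ_iff.2 ⟨Sum.inr true, h1⟩), hcard]
    have hmem : ({(Sum.inr false : Fin m ⊕ Bool)} : Finset _) ∈
        (univ.image f).erase {(Sum.inr true : Fin m ⊕ Bool)} := by
      refine Finset.mem_erase.2 ⟨?_, mem_image_univ_iff.2 ⟨Sum.inr false, h2⟩⟩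
      intro h
      have := Finset.mem_singleton_self (Sum.inr false : Fin m ⊕ Bool)
      rw [h] at this
      simp at this
    have := case1_image hf h1 h2
    rw [this] at *
    rw [← Finset.card_image_of_injective (univ.image (fdown f)) up_injective,
      ← ‹univ.image (fun i => up (fdown f i)) = (univ.image (fdown f)).image up›,
      case1_image hf h1 h2, Finset.card_erase_of_mem hmem, hc]
    omega
  · intro i
    have : (fdown f i).card = (f (Sum.inl i)).card := by
      rw [← case1_up_down hf h1 h2 i, card_up]
    rw [this]
    exact hodd _

lemma case1_rinv : bsing (fdown f) = f := by
  funext x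
  cases x with
  | inl i => exact case1_up_down hf h1 h2 i
  | inr c =>
    cases c
    · exact h2.symm
    · exact h1.symm

end Case1

/-! ### forward, case 2 -/

section Case2
variable (hab : f (Sum.inr true) = f (Sum.inr false))
include hab

lemma case2_decomp :
    f (Sum.inr true) =
      insert (Sum.inr true) (insert (Sum.inr false) (up (down (f (Sum.inr true))))) := by
  ext x
  cases x with
  | inl i => simp
  | inr c =>
    cases c
    · have hm : Sum.inr false ∈ f (Sum.inr true) := by rw [hab]; exact hf.1 _
      simp [hm]
    · have hm : Sum.inr true ∈ f (Sum.inr true) := hf.1 _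
      simp [hm]

lemma case2_card : (f (Sum.inr true)).card = (down (f (Sum.inr true))).card + 2 := by
  conv_lhs => rw [case2_decomp hf hab]
  rw [Finset.card_insert_of_notMem (by simp), Finset.card_insert_of_notMem (by simp), card_up]

lemma case2_down_nonempty (hodd : ∀ x, Odd (f x).card) :
    (down (f (Sum.inr true))).Nonempty := by
  rw [← Finset.card_pos]
  have h3 := hodd (Sum.inr true)
  have hc := case2_card hf hab
  rcases h3 with ⟨r, hr⟩
  by_contra h
  push_neg at h
  interval_cases hd : (down (f (Sum.inr true))).card
  omega

lemma case2_no_inr {i : Fin m} (hi : f (Sum.inl i) ≠ f (Sum.inr true)) (c : Bool) :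
    Sum.inr c ∉ f (Sum.inl i) := by
  intro hc
  have := hf.2 _ _ hc
  cases c
  · rw [hab] at hi
    exact hi this.symm
  · exact hi this.symm

lemma case2_image (hodd : ∀ x, Odd (f x).card) :
    univ.image (fdown f) = (univ.image f).image down := by
  ext t
  simp only [mem_image, mem_univ, true_and]
  constructor
  · rintro ⟨i, rfl⟩
    exact ⟨f (Sum.inl i), ⟨Sum.inl i, rfl⟩, rfl⟩
  · rintro ⟨s, ⟨x, rfl⟩, rfl⟩
    cases x with
    | inl i => exact ⟨i, rfl⟩
    | inr c =>
      obtain ⟨i₀, hi₀⟩ := case2_down_nonempty hf hab hodd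
      have : f (Sum.inl i₀) = f (Sum.inr true) := hf.2 _ _ (mem_down.1 hi₀)
      cases c
      · refine ⟨i₀, ?_⟩
        simp only [fdown, this, hab]
      · exact ⟨i₀, by simp only [fdown, this]⟩

lemma case2_down_injOn (hodd : ∀ x, Odd (f x).card) :
    Set.InjOn down (↑(univ.image f) : Set (Finset (Fin m ⊕ Bool))) := by
  intro t ht u hu htu
  simp only [coe_image, Set.mem_image] at ht hu
  obtain ⟨x, -, rfl⟩ := ht
  obtain ⟨y, -, rfl⟩ := hu
  by_contra hne
  have hdisj : Disjoint (down (f x)) (down (f y)) := disjoint_down (hf.disjoint hne)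
  have hxne : (down (f x)).Nonempty := by
    by_cases hx : f x = f (Sum.inr true)
    · rw [hx]; exact case2_down_nonempty hf hab hodd
    · obtain ⟨z, hz⟩ := hf.nonempty x
      cases z with
      | inl i => exact ⟨i, mem_down.2 hz⟩
      | inr c =>
        exfalso
        have := hf.2 _ _ hz
        cases c
        · rw [hab] at hx; exact hx this.symm
        · exact hx this.symm
  rw [htu] at hdisj
  rw [disjoint_self] at hdisj
  rw [htu, hdisj] at hxne
  simp at hxne

lemma case2_pfCond (hcard : (univ.image f).card = k) (hodd : ∀ x, Odd (f x).card) :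
    pfCond k (fdown f) := by
  refine ⟨fdown_isPF hf, ?_, ?_⟩
  · rw [case2_image hf hab hodd, Finset.card_image_of_injOn (case2_down_injOn hf hab hodd),
      hcard]
  · intro i
    by_cases hi : f (Sum.inl i) = f (Sum.inr true)
    · have : (fdown f i).card + 2 = (f (Sum.inl i)).card := by
        rw [hi, case2_card hf hab]
        simp [fdown, hi]
      have h3 := hodd (Sum.inl i)
      rcases h3 with ⟨r, hr⟩
      exact ⟨r - 1, by omega⟩
    · have : up (fdown f i) = f (Sum.inl i) :=
        up_down _ (case2_no_inr hf hab hi)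
      rw [← card_up (fdown f i), this]
      exact hodd _

lemma case2_marker (hodd : ∀ x, Odd (f x).card) :
    down (f (Sum.inr true)) ∈ univ.image (fdown f) := by
  obtain ⟨i₀, hi₀⟩ := case2_down_nonempty hf hab hodd
  have : f (Sum.inl i₀) = f (Sum.inr true) := hf.2 _ _ (mem_down.1 hi₀)
  exact mem_image.2 ⟨i₀, mem_univ _, by simp only [fdown, this]⟩

lemma case2_rinv : bsame (fdown f) (down (f (Sum.inr true))) = f := by
  funext x
  cases x with
  | inl i =>
    simp only [bsame, Sum.elim_inl]
    split_ifs with hi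
    · rw [← case2_decomp hf hab]
      exact (hf.2 _ _ (mem_down.1 hi)).symm
    · apply up_down
      apply case2_no_inr hf hab
      intro he
      exact hi (mem_down.2 (he ▸ hf.1 (Sum.inl i)))
  | inr c =>
    simp only [bsame, Sum.elim_inr, ← case2_decomp hf hab]
    cases c
    · exact hab
    · rfl

end Case2

/-! ### forward, case 3 -/

section Case3
variable (hAB : f (Sum.inr true) ≠ f (Sum.inr false))
    (hn1 : ¬(f (Sum.inr true) = {Sum.inr true} ∧ f (Sum.inr false) = {Sum.inr false}))
include hAB

lemma case3_b_not_mem : Sum.inr false ∉ f (Sum.inr true) := by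
  intro h
  exact hAB (hf.2 _ _ h).symm

lemma case3_a_not_mem : Sum.inr true ∉ f (Sum.inr false) := by
  intro h
  exact hAB (hf.2 _ _ h)

lemma case3_decompA :
    f (Sum.inr true) = insert (Sum.inr true) (up (down (f (Sum.inr true)))) := by
  ext x
  cases x with
  | inl i => simp
  | inr c =>
    cases c
    · simp [case3_b_not_mem hf hAB]
    · simp [hf.1 (Sum.inr true)]

lemma case3_decompB :
    f (Sum.inr false) = insert (Sum.inr false) (up (down (f (Sum.inr false)))) := by
  ext x
  cases x with
  | inl i => simp
  | inr c =>
    cases c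
    · simp [hf.1 (Sum.inr false)]
    · simp [case3_a_not_mem hf hAB]

lemma case3_even (hodd : ∀ x, Odd (f x).card) :
    Even (down (f (Sum.inr true))).card ∧ Even (down (f (Sum.inr false))).card := by
  constructor
  · have h1 : (f (Sum.inr true)).card = (down (f (Sum.inr true))).card + 1 := by
      conv_lhs => rw [case3_decompA hf hAB]
      rw [Finset.card_insert_of_notMem (by simp), card_up]
    obtain ⟨r, hr⟩ := hodd (Sum.inr true)
    exact ⟨r, by omega⟩
  · have h1 : (f (Sum.inr false)).card = (down (f (Sum.inr false))).card + 1 := by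
      conv_lhs => rw [case3_decompB hf hAB]
      rw [Finset.card_insert_of_notMem (by simp), card_up]
    obtain ⟨r, hr⟩ := hodd (Sum.inr false)
    exact ⟨r, by omega⟩

lemma case3_disj : Disjoint (down (f (Sum.inr true))) (down (f (Sum.inr false))) :=
  disjoint_down (hf.disjoint hAB)

include hn1 in
lemma case3_Sne : (down (f (Sum.inr true)) ∪ down (f (Sum.inr false))).Nonempty := by
  rw [Finset.nonempty_iff_ne_empty]
  intro h
  rw [Finset.union_eq_empty] at h
  refine hn1 ⟨?_, ?_⟩
  · rw [case3_decompA hf hAB, h.1]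
    simp [up]
  · rw [case3_decompB hf hAB, h.2]
    simp [up]

lemma case3_no_inr {i : Fin m} (hi1 : f (Sum.inl i) ≠ f (Sum.inr true))
    (hi2 : f (Sum.inl i) ≠ f (Sum.inr false)) (c : Bool) : Sum.inr c ∉ f (Sum.inl i) := by
  intro hc
  have := hf.2 _ _ hc
  cases c
  · exact hi2 this.symm
  · exact hi1 this.symm

omit hAB in
lemma case3_mem_union_iff {i : Fin m} :
    (i ∈ down (f (Sum.inr true)) ∪ down (f (Sum.inr false))) ↔
      f (Sum.inl i) = f (Sum.inr true) ∨ f (Sum.inl i) = f (Sum.inr false) := by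
  simp only [Finset.mem_union, mem_down]
  rw [hf.mem_iff, hf.mem_iff]

include hn1

lemma case3_isPF : IsPF (fdiff f) := by
  have hdisjP := tog_disjoint (case3_disj hf hAB)
  have hunion := tog_union (case3_Sne hf hAB hn1)
  constructor
  · intro i
    simp only [fdiff]
    split_ifs with h1' h2' <;> first
      | exact h1'
      | exact h2'
      | exact mem_down.2 (hf.1 (Sum.inl i))
  · intro i j hij
    simp only [fdiff] at hij ⊢
    split_ifs at hij with h1' h2'
    · rw [if_pos hij, if_pos h1']
    · rw [if_neg (Finset.disjoint_right.1 hdisjP hij), if_pos hij, if_neg h1', if_pos h2']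
    · have hj : f (Sum.inl j) ≠ f (Sum.inr true) ∧ f (Sum.inl j) ≠ f (Sum.inr false) := by
        have : j ∉ down (f (Sum.inr true)) ∪ down (f (Sum.inr false)) := by
          rw [← hunion, Finset.mem_union]
          tauto
        rw [case3_mem_union_iff hf] at this
        tauto
      have hmem : Sum.inl i ∈ f (Sum.inl j) := mem_down.1 hij
      have heq : f (Sum.inl i) = f (Sum.inl j) := hf.2 _ _ hmem
      have hi : i ∉ down (f (Sum.inr true)) ∪ down (f (Sum.inr false)) := by
        rw [case3_mem_union_iff hf, heq]
        tauto
      rw [← hunion, Finset.mem_union] at hi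
      rw [if_neg (fun h => hi (Or.inl h)), if_neg (fun h => hi (Or.inr h)), if_neg h1',
        if_neg h2', heq]

lemma case3_image (hodd : ∀ x, Odd (f x).card) :
    univ.image (fdiff f) =
      insert (tog (down (f (Sum.inr true))) (down (f (Sum.inr false)))).1
        (insert (tog (down (f (Sum.inr true))) (down (f (Sum.inr false)))).2
          ((((univ.image f).erase (f (Sum.inr true))).erase (f (Sum.inr false))).image down)) := by
  have hdisjP := tog_disjoint (case3_disj hf hAB)
  have hunion := tog_union (case3_Sne hf hAB hn1)
  have hoddP := tog_card_odd (case3_disj hf hAB) (case3_Sne hf hAB hn1)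
    (case3_even hf hAB hodd).1 (case3_even hf hAB hodd).2
  have hP1ne : (tog (down (f (Sum.inr true))) (down (f (Sum.inr false)))).1.Nonempty := by
    rw [← Finset.card_pos]
    obtain ⟨r, hr⟩ := hoddP.1
    omega
  have hP2ne : (tog (down (f (Sum.inr true))) (down (f (Sum.inr false)))).2.Nonempty := by
    rw [← Finset.card_pos]
    obtain ⟨r, hr⟩ := hoddP.2
    omega
  ext t
  simp only [mem_image, mem_univ, true_and, mem_insert, mem_erase]
  constructor
  · rintro ⟨i, rfl⟩
    simp only [fdiff]
    split_ifs with h1' h2'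
    · tauto
    · tauto
    · right; right
      have hi : i ∉ down (f (Sum.inr true)) ∪ down (f (Sum.inr false)) := by
        rw [← hunion, Finset.mem_union]; tauto
      rw [case3_mem_union_iff hf] at hi
      push_neg at hi
      exact ⟨f (Sum.inl i), ⟨hi.2, hi.1, ⟨Sum.inl i, rfl⟩⟩, rfl⟩
  · rintro (rfl | rfl | ⟨s, ⟨hsB, hsA, ⟨x, rfl⟩⟩, rfl⟩)
    · obtain ⟨i, hi⟩ := hP1ne
      refine ⟨i, ?_⟩
      simp only [fdiff]
      rw [if_pos hi]
    · obtain ⟨i, hi⟩ := hP2ne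
      refine ⟨i, ?_⟩
      simp only [fdiff]
      rw [if_neg (Finset.disjoint_right.1 hdisjP hi), if_pos hi]
    · obtain ⟨i, rfl⟩ : ∃ i, x = Sum.inl i := by
        cases x with
        | inl i => exact ⟨i, rfl⟩
        | inr c =>
          exfalso
          cases c
          · exact hsB rfl
          · exact hsA rfl
      have hi : i ∉ down (f (Sum.inr true)) ∪ down (f (Sum.inr false)) := by
        rw [case3_mem_union_iff hf]
        tauto
      rw [← hunion, Finset.mem_union] at hi
      refine ⟨i, ?_⟩
      simp only [fdiff]
      rw [if_neg (fun h => hi (Or.inl h)), if_neg (fun h => hi (Or.inr h))]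


lemma case3_P_ne (hodd : ∀ x, Odd (f x).card) :
    (tog (down (f (Sum.inr true))) (down (f (Sum.inr false)))).1 ≠
      (tog (down (f (Sum.inr true))) (down (f (Sum.inr false)))).2 := by
  have hoddP := tog_card_odd (case3_disj hf hAB) (case3_Sne hf hAB hn1)
    (case3_even hf hAB hodd).1 (case3_even hf hAB hodd).2
  have hdisjP := tog_disjoint (case3_disj hf hAB)
  intro h
  rw [h, disjoint_self] at hdisjP
  rw [h, hdisjP] at hoddP
  obtain ⟨r, hr⟩ := hoddP.1
  simp at hr

lemma case3_pfCond (hcard : (univ.image f).card = k) (hodd : ∀ x, Odd (f x).card) :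
    pfCond k (fdiff f) := by
  have hdisjP := tog_disjoint (case3_disj hf hAB)
  have hunion := tog_union (case3_Sne hf hAB hn1)
  have hoddP := tog_card_odd (case3_disj hf hAB) (case3_Sne hf hAB hn1)
    (case3_even hf hAB hodd).1 (case3_even hf hAB hodd).2
  have hP1ne : (tog (down (f (Sum.inr true))) (down (f (Sum.inr false)))).1.Nonempty := by
    rw [← Finset.card_pos]; obtain ⟨r, hr⟩ := hoddP.1; omega
  have hP2ne : (tog (down (f (Sum.inr true))) (down (f (Sum.inr false)))).2.Nonempty := by
    rw [← Finset.card_pos]; obtain ⟨r, hr⟩ := hoddP.2; omega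
  have hsubset1 : (tog (down (f (Sum.inr true))) (down (f (Sum.inr false)))).1 ⊆
      down (f (Sum.inr true)) ∪ down (f (Sum.inr false)) := by
    rw [← hunion]; exact Finset.subset_union_left
  have hsubset2 : (tog (down (f (Sum.inr true))) (down (f (Sum.inr false)))).2 ⊆
      down (f (Sum.inr true)) ∪ down (f (Sum.inr false)) := by
    rw [← hunion]; exact Finset.subset_union_right
  have hdown_ne : ∀ (P : Finset (Fin m)), P.Nonempty →
      P ⊆ down (f (Sum.inr true)) ∪ down (f (Sum.inr false)) →
      ∀ s ∈ ((univ.image f).erase (f (Sum.inr true))).erase (f (Sum.inr false)),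
        P ≠ down s := by
    rintro P hPne hPsub s hs rfl
    obtain ⟨i, hi⟩ := hPne
    simp only [mem_erase, mem_image, mem_univ, true_and] at hs
    obtain ⟨hsB, hsA, x, rfl⟩ := hs
    have h1 : f (Sum.inl i) = f x := hf.2 _ _ (mem_down.1 hi)
    have h2 := (case3_mem_union_iff hf).1 (hPsub hi)
    rw [h1] at h2
    tauto
  refine ⟨case3_isPF hf hAB hn1, ?_, ?_⟩
  · rw [case3_image hf hAB hn1 hodd]
    have hinj : Set.InjOn down
        (↑(((univ.image f).erase (f (Sum.inr true))).erase (f (Sum.inr false))) :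
          Set (Finset (Fin m ⊕ Bool))) := by
      intro t ht u hu htu
      have hup : ∀ v ∈ ((univ.image f).erase (f (Sum.inr true))).erase (f (Sum.inr false)),
          up (down v) = v := by
        intro v hv
        simp only [mem_erase, mem_image, mem_univ, true_and] at hv
        obtain ⟨hvB, hvA, x, rfl⟩ := hv
        obtain ⟨i, rfl⟩ : ∃ i, x = Sum.inl i := by
          cases x with
          | inl i => exact ⟨i, rfl⟩
          | inr c =>
            exfalso; cases c
            · exact hvB rfl
            · exact hvA rfl
        exact up_down _ (case3_no_inr hf hAB hvA hvB)
      rw [← hup t (mem_coe.1 ht), ← hup u (mem_coe.1 hu), htu]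
    rw [Finset.card_insert_of_notMem, Finset.card_insert_of_notMem,
      Finset.card_image_of_injOn hinj, Finset.card_erase_of_mem, Finset.card_erase_of_mem,
      hcard]
    · have h2 : 1 < k := by
        rw [← hcard]
        exact Finset.one_lt_card.2
          ⟨f (Sum.inr true), mem_image_of_mem _ (mem_univ _),
           f (Sum.inr false), mem_image_of_mem _ (mem_univ _), hAB⟩
      omega
    · exact mem_image_of_mem _ (mem_univ _)
    · exact Finset.mem_erase.2 ⟨Ne.symm hAB, mem_image_of_mem _ (mem_univ _)⟩
    · -- P.2 not in image part
      simp only [mem_image]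
      rintro ⟨s, hs, heq⟩
      exact hdown_ne _ hP2ne hsubset2 s hs heq.symm
    · -- P.1 not in insert P.2 (...)
      simp only [mem_insert, mem_image]
      rintro (h | ⟨s, hs, heq⟩)
      · exact case3_P_ne hf hAB hn1 hodd h
      · exact hdown_ne _ hP1ne hsubset1 s hs heq.symm
  · intro i
    simp only [fdiff]
    split_ifs with h1' h2'
    · exact hoddP.1
    · exact hoddP.2
    · have hi : i ∉ down (f (Sum.inr true)) ∪ down (f (Sum.inr false)) := by
        rw [← hunion, Finset.mem_union]; tauto
      rw [case3_mem_union_iff hf] at hi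
      push_neg at hi
      rw [← card_up, up_down _ (case3_no_inr hf hAB hi.1 hi.2)]
      exact hodd _

lemma case3_marker (hodd : ∀ x, Odd (f x).card) :
    ((tog (down (f (Sum.inr true))) (down (f (Sum.inr false)))).1,
     (tog (down (f (Sum.inr true))) (down (f (Sum.inr false)))).2) ∈
      (univ.image (fdiff f)).offDiag := by
  rw [Finset.mem_offDiag]
  have himg := case3_image hf hAB hn1 hodd
  refine ⟨?_, ?_, case3_P_ne hf hAB hn1 hodd⟩
  · rw [himg]; exact mem_insert_self _ _
  · rw [himg]; exact mem_insert_of_mem (mem_insert_self _ _)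

lemma case3_rinv :
    bdiff (fdiff f) (tog (down (f (Sum.inr true))) (down (f (Sum.inr false)))).1
      (tog (down (f (Sum.inr true))) (down (f (Sum.inr false)))).2 = f := by
  have hdisjP := tog_disjoint (case3_disj hf hAB)
  have hunion := tog_union (case3_Sne hf hAB hn1)
  have htog : tog (tog (down (f (Sum.inr true))) (down (f (Sum.inr false)))).1
      (tog (down (f (Sum.inr true))) (down (f (Sum.inr false)))).2 =
      (down (f (Sum.inr true)), down (f (Sum.inr false))) :=
    tog_tog (case3_disj hf hAB) (case3_Sne hf hAB hn1)
  funext x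
  cases x with
  | inr c =>
    cases c
    · simp only [bdiff, Sum.elim_inr, Bool.false_eq_true, if_false, htog]
      exact (case3_decompB hf hAB).symm
    · simp only [bdiff, Sum.elim_inr, if_true, htog]
      exact (case3_decompA hf hAB).symm
  | inl i =>
    simp only [bdiff, Sum.elim_inl, htog]
    by_cases h1 : i ∈ down (f (Sum.inr true))
    · rw [if_pos h1]
      rw [← case3_decompA hf hAB]
      exact (hf.2 _ _ (mem_down.1 h1)).symm
    · rw [if_neg h1]
      by_cases h2 : i ∈ down (f (Sum.inr false))
      · rw [if_pos h2, ← case3_decompB hf hAB]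
        exact (hf.2 _ _ (mem_down.1 h2)).symm
      · rw [if_neg h2]
        have hi : i ∉ down (f (Sum.inr true)) ∪ down (f (Sum.inr false)) := by
          rw [Finset.mem_union]; tauto
        have hi' := hi
        rw [case3_mem_union_iff hf] at hi'
        push_neg at hi'
        rw [← hunion, Finset.mem_union] at hi
        simp only [fdiff]
        rw [if_neg (fun h => hi (Or.inl h)), if_neg (fun h => hi (Or.inr h))]
        exact up_down _ (case3_no_inr hf hAB hi'.1 hi'.2)

end Case3
end Fwd


/-! ### discriminator lemmas for backward maps -/

lemma bsing_fdown : fdown (bsing g) = g := by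
  funext i
  simp [fdown, bsing]

lemma bsame_ab (C : Finset (Fin m)) :
    bsame g C (Sum.inr true) = insert (Sum.inr true) (insert (Sum.inr false) (up C)) ∧
    bsame g C (Sum.inr false) = insert (Sum.inr true) (insert (Sum.inr false) (up C)) :=
  ⟨rfl, rfl⟩

lemma bsame_ne_singleton (C : Finset (Fin m)) :
    bsame g C (Sum.inr true) ≠ {Sum.inr true} := by
  intro h
  have : (Sum.inr false : Fin m ⊕ Bool) ∈ bsame g C (Sum.inr true) := by
    rw [(bsame_ab C).1]
    exact mem_insert_of_mem (mem_insert_self _ _)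
  rw [h, mem_singleton] at this
  cases this

lemma bdiff_A_ne_B (hg : IsPF g) {C D : Finset (Fin m)} (hC : C ∈ univ.image g) :
    bdiff g C D (Sum.inr true) ≠ bdiff g C D (Sum.inr false) := by
  rw [(bdiff_ab (g := g) (C := C) (D := D)).1, (bdiff_ab (g := g) (C := C) (D := D)).2]
  intro h
  have : (Sum.inr true : Fin m ⊕ Bool) ∈ insert (Sum.inr false) (up (tog C D).2) := by
    rw [← h]; exact mem_insert_self _ _
  rcases mem_insert.1 this with h' | h'
  · cases h'
  · exact inr_not_mem_up h'

lemma bdiff_not_case1 (hg : IsPF g) {C D : Finset (Fin m)} (hC : C ∈ univ.image g) :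
    ¬(bdiff g C D (Sum.inr true) = {Sum.inr true} ∧
      bdiff g C D (Sum.inr false) = {Sum.inr false}) := by
  rintro ⟨h1, h2⟩
  rw [(bdiff_ab (g := g) (C := C) (D := D)).1] at h1
  rw [(bdiff_ab (g := g) (C := C) (D := D)).2] at h2
  have hP1 : (tog C D).1 = ∅ := by
    rw [← Finset.subset_empty]
    intro i hi
    have : (Sum.inl i : Fin m ⊕ Bool) ∈ insert (Sum.inr true) (up (tog C D).1) :=
      mem_insert_of_mem (mem_up.2 hi)
    rw [h1, mem_singleton] at this
    cases this
  have hP2 : (tog C D).2 = ∅ := by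
    rw [← Finset.subset_empty]
    intro i hi
    have : (Sum.inl i : Fin m ⊕ Bool) ∈ insert (Sum.inr false) (up (tog C D).2) :=
      mem_insert_of_mem (mem_up.2 hi)
    rw [h2, mem_singleton] at this
    cases this
  have := tog_union (union_nonempty' (D := D) hg hC)
  rw [hP1, hP2] at this
  have h3 := union_nonempty' (D := D) hg hC
  rw [← this] at h3
  simp at h3

end Counting

/-! ### the big equivalence -/

section BigEquiv
variable {m k : ℕ}

abbrev T2t (m k : ℕ) :=
  {p : ({g : Fin m → Finset (Fin m) // pfCond k g} × Finset (Fin m)) //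
    p.2 ∈ univ.image p.1.1}

abbrev T3t (m k : ℕ) :=
  {p : ({g : Fin m → Finset (Fin m) // pfCond k g} × (Finset (Fin m) × Finset (Fin m))) //
    p.2 ∈ (univ.image p.1.1).offDiag}

noncomputable def bigEquiv (hk : 2 ≤ k) :
    {f : Fin m ⊕ Bool → Finset (Fin m ⊕ Bool) // pfCond k f} ≃
      ({g : Fin m → Finset (Fin m) // pfCond (k - 2) g} ⊕ (T2t m k ⊕ T3t m k)) where
  toFun F :=
    if h1 : F.1 (Sum.inr true) = {Sum.inr true} ∧ F.1 (Sum.inr false) = {Sum.inr false} then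
      Sum.inl ⟨fdown F.1, case1_pfCond F.2.1 h1.1 h1.2 F.2.2.1 F.2.2.2⟩
    else if h2 : F.1 (Sum.inr true) = F.1 (Sum.inr false) then
      Sum.inr (Sum.inl ⟨(⟨fdown F.1, case2_pfCond F.2.1 h2 F.2.2.1 F.2.2.2⟩,
        down (F.1 (Sum.inr true))), case2_marker F.2.1 h2 F.2.2.2⟩)
    else
      Sum.inr (Sum.inr ⟨(⟨fdiff F.1, case3_pfCond F.2.1 h2 h1 F.2.2.1 F.2.2.2⟩,
        tog (down (F.1 (Sum.inr true))) (down (F.1 (Sum.inr false)))),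
        by simpa using case3_marker F.2.1 h2 h1 F.2.2.2⟩)
  invFun x :=
    match x with
    | Sum.inl g => ⟨bsing g.1, bsing_pfCond hk g.2⟩
    | Sum.inr (Sum.inl p) =>
      ⟨bsame p.1.1.1 p.1.2, bsame_pfCond p.1.1.2.1 p.2 p.1.1.2.2.1 p.1.1.2.2.2⟩
    | Sum.inr (Sum.inr p) =>
      ⟨bdiff p.1.1.1 p.1.2.1 p.1.2.2,
        bdiff_pfCond p.1.1.2.1 (Finset.mem_offDiag.1 p.2).1 (Finset.mem_offDiag.1 p.2).2.1
          (Finset.mem_offDiag.1 p.2).2.2 p.1.1.2.2.1 p.1.1.2.2.2⟩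
  right_inv x := by
    match x with
    | Sum.inl g =>
      simp only []
      rw [dif_pos ⟨rfl, rfl⟩]
      congr 1
      exact Subtype.ext bsing_fdown
    | Sum.inr (Sum.inl p) =>
      simp only []
      rw [dif_neg (fun h => bsame_ne_singleton p.1.2 h.1),
        dif_pos (((bsame_ab (g := p.1.1.1) p.1.2).1).trans
          ((bsame_ab (g := p.1.1.1) p.1.2).2).symm)]
      congr 1
      congr 1
      apply Subtype.ext
      apply Prod.ext
      · exact Subtype.ext (bsame_fdown p.1.1.2.1 p.2)
      · exact down_bsame_big
    | Sum.inr (Sum.inr p) =>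
      simp only []
      obtain ⟨hC, hD, hCD⟩ := Finset.mem_offDiag.1 p.2
      rw [dif_neg (bdiff_not_case1 p.1.1.2.1 hC), dif_neg (bdiff_A_ne_B p.1.1.2.1 hC)]
      congr 1
      congr 1
      apply Subtype.ext
      apply Prod.ext
      · exact Subtype.ext (bdiff_fdiff p.1.1.2.1 hC hD hCD)
      · exact bdiff_tog_recover p.1.1.2.1 hC hD hCD
  left_inv F := by
    by_cases h1 : F.1 (Sum.inr true) = {Sum.inr true} ∧ F.1 (Sum.inr false) = {Sum.inr false}
    · simp only []
      rw [dif_pos h1]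
      exact Subtype.ext (case1_rinv F.2.1 h1.1 h1.2)
    · by_cases h2 : F.1 (Sum.inr true) = F.1 (Sum.inr false)
      · simp only []
        rw [dif_neg h1, dif_pos h2]
        exact Subtype.ext (case2_rinv F.2.1 h2)
      · simp only []
        rw [dif_neg h1, dif_neg h2]
        exact Subtype.ext (case3_rinv F.2.1 h2 h1)

end BigEquiv

/-! ### counting -/

section Count2
variable {m k : ℕ}

lemma nat_card_sigma {ι : Type*} [Fintype ι] (T : ι → Type*) [∀ i, Finite (T i)] :
    Nat.card (Σ i, T i) = ∑ i, Nat.card (T i) := by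
  haveI : ∀ i, Fintype (T i) := fun i => Fintype.ofFinite _
  rw [← Fintype.card_eq_nat_card, Fintype.card_sigma]
  exact Finset.sum_congr rfl (fun i _ => Fintype.card_eq_nat_card)

instance : Finite {g : Fin m → Finset (Fin m) // pfCond k g} := Subtype.finite

instance : Finite (T2t m k) := by unfold T2t; exact Subtype.finite

instance : Finite (T3t m k) := by unfold T3t; exact Subtype.finite

lemma card_T2t : Nat.card (T2t m k) = Nat.card {g : Fin m → Finset (Fin m) // pfCond k g} * k := by
  haveI : Fintype {g : Fin m → Finset (Fin m) // pfCond k g} := Fintype.ofFinite _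
  have e : T2t m k ≃ Σ g : {g : Fin m → Finset (Fin m) // pfCond k g},
      {C : Finset (Fin m) // C ∈ univ.image g.1} :=
    Equiv.subtypeProdEquivSigmaSubtype
      (p := fun (g : {g : Fin m → Finset (Fin m) // pfCond k g}) (C : Finset (Fin m)) =>
        C ∈ univ.image g.1)
  rw [Nat.card_congr e, nat_card_sigma]
  have : ∀ g : {g : Fin m → Finset (Fin m) // pfCond k g},
      Nat.card {C : Finset (Fin m) // C ∈ univ.image g.1} = k := by
    intro g
    rw [Nat.card_eq_finsetCard]
    exact g.2.2.1
  rw [Finset.sum_congr rfl (fun g _ => this g), Finset.sum_const, smul_eq_mul,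
    ← Fintype.card_eq_nat_card, Finset.card_univ]

lemma card_T3t : Nat.card (T3t m k) =
    Nat.card {g : Fin m → Finset (Fin m) // pfCond k g} * (k * k - k) := by
  haveI : Fintype {g : Fin m → Finset (Fin m) // pfCond k g} := Fintype.ofFinite _
  have e : T3t m k ≃ Σ g : {g : Fin m → Finset (Fin m) // pfCond k g},
      {q : Finset (Fin m) × Finset (Fin m) // q ∈ (univ.image g.1).offDiag} :=
    Equiv.subtypeProdEquivSigmaSubtype
      (p := fun (g : {g : Fin m → Finset (Fin m) // pfCond k g})
        (q : Finset (Fin m) × Finset (Fin m)) => q ∈ (univ.image g.1).offDiag)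
  rw [Nat.card_congr e, nat_card_sigma]
  have : ∀ g : {g : Fin m → Finset (Fin m) // pfCond k g},
      Nat.card {q : Finset (Fin m) × Finset (Fin m) // q ∈ (univ.image g.1).offDiag}
        = k * k - k := by
    intro g
    rw [Nat.card_eq_finsetCard, Finset.offDiag_card, g.2.2.1]
  rw [Finset.sum_congr rfl (fun g _ => this g), Finset.sum_const, smul_eq_mul,
    ← Fintype.card_eq_nat_card, Finset.card_univ]

lemma pfCard_rec (hk : 2 ≤ k) :
    pfCard (Fin m ⊕ Bool) k = pfCard (Fin m) (k - 2) + k ^ 2 * pfCard (Fin m) k := by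
  rw [pfCard, Nat.card_congr (bigEquiv hk), Nat.card_sum, Nat.card_sum, card_T2t, card_T3t]
  have h1 : k ≤ k * k := Nat.le_mul_of_pos_left k (by omega)
  have h2 : k * k = k ^ 2 := (sq k).symm
  rw [pfCard, pfCard]
  set c := Nat.card {g : Fin m → Finset (Fin m) // pfCond k g}
  have : c * k + c * (k * k - k) = k ^ 2 * c := by
    rw [← Nat.mul_add, Nat.add_sub_cancel' h1, h2, Nat.mul_comm]
  omega

end Count2

/-- The recurrence `O(n,k) = O(n−2, k−2) + k² · O(n−2, k)` for `n, k ≥ 2`. -/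
theorem stmt3 (n k : ℕ) (hn : 2 ≤ n) (hk : 2 ≤ k) :
    oddStirling n k = oddStirling (n - 2) (k - 2) + k ^ 2 * oddStirling (n - 2) k := by
  obtain ⟨m, rfl⟩ : ∃ m, n = m + 2 := ⟨n - 2, by omega⟩
  have e : Fin (m + 2) ≃ (Fin m ⊕ Bool) := Fintype.equivOfCardEq (by simp)
  rw [lemmaA, lemmaA, lemmaA, pfCard_congr e k, pfCard_rec hk]
  have h : m + 2 - 2 = m := by omega
  rw [h]
end

section
/- For all natural numbers n and k, the following identity holds in the integers: 2^k · k! · O(n,k) = ∑_{j=0}^{k} (−1)^{k−j} · C(k,j) · (2j − k)^n, where C denotes the binomial coefficient and O(n,k) is the number of set partitions of an n-element set into exactly k blocks all of odd cardinality. -/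
open Finset

namespace OddStirlingAux

variable {n k : ℕ}

/-- The fiber of `g` over `i`. -/
def fib (g : Fin n → Fin k) (i : Fin k) : Finset (Fin n) :=
  univ.filter fun x => g x = i

lemma mem_fib {g : Fin n → Fin k} {i : Fin k} {x : Fin n} : x ∈ fib g i ↔ g x = i := by
  simp [fib]

lemma fib_injective {g : Fin n → Fin k} (hg : ∀ i, (fib g i).Nonempty) :
    Function.Injective (fib g) := by
  intro i j h
  obtain ⟨x, hx⟩ := hg i
  have hxj : x ∈ fib g j := h ▸ hx
  rw [mem_fib] at hx hxj
  rw [← hx, hxj]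

/-- The partition of `Fin n` into fibers of `g`. -/
def fiberPartition (g : Fin n → Fin k) (hg : ∀ i, (fib g i).Nonempty) :
    Finpartition (univ : Finset (Fin n)) where
  parts := univ.image (fib g)
  supIndep := by
    rw [Finset.supIndep_iff_pairwiseDisjoint]
    rintro a ha b hb hab
    simp only [coe_image, Set.mem_image] at ha hb
    obtain ⟨i, -, rfl⟩ := ha
    obtain ⟨j, -, rfl⟩ := hb
    simp only [id, Finset.disjoint_left]
    intro x hx hx'
    rw [mem_fib] at hx hx'
    exact hab (by rw [← hx, hx'])
  sup_parts := by
    rw [Finset.sup_image]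
    ext x
    simp only [Finset.mem_sup, Function.comp, id_eq, mem_univ, iff_true]
    exact ⟨g x, trivial, mem_fib.mpr rfl⟩
  bot_notMem := by
    simp only [bot_eq_empty, mem_image]
    rintro ⟨i, -, h⟩
    exact (hg i).ne_empty h

lemma nonempty_of_odd {g : Fin n → Fin k} (hg : ∀ i, Odd (fib g i).card) :
    ∀ i, (fib g i).Nonempty :=
  fun i => card_pos.mp (hg i).pos

/-- The classifying map from odd-fiber functions to labelled odd partitions. -/
noncomputable def toSigma
    (gh : {g : Fin n → Fin k // ∀ i, Odd (fib g i).card}) :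
    Σ P : {P : Finpartition (univ : Finset (Fin n)) //
        P.parts.card = k ∧ ∀ b ∈ P.parts, Odd b.card},
      (Fin k ≃ {b // b ∈ P.1.parts}) :=
  ⟨⟨fiberPartition gh.1 (nonempty_of_odd gh.2), by
      show (univ.image (fib gh.1)).card = k
      rw [Finset.card_image_of_injective _ (fib_injective (nonempty_of_odd gh.2)),
        card_univ, Fintype.card_fin], by
      rintro b hb
      obtain ⟨i, -, rfl⟩ := Finset.mem_image.mp hb
      exact gh.2 i⟩,
    Equiv.ofBijective
      (fun i => ⟨fib gh.1 i, Finset.mem_image_of_mem _ (mem_univ i)⟩)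
      ⟨fun i j h => fib_injective (nonempty_of_odd gh.2) (Subtype.ext_iff.mp h),
       by
        rintro ⟨b, hb⟩
        obtain ⟨i, -, rfl⟩ := Finset.mem_image.mp hb
        exact ⟨i, rfl⟩⟩⟩

lemma toSigma_snd_coe (gh : {g : Fin n → Fin k // ∀ i, Odd (fib g i).card}) (i : Fin k) :
    (((toSigma gh).2 i : Finset (Fin n))) = fib gh.1 i := rfl

lemma toSigma_bijective :
    Function.Bijective (toSigma (n := n) (k := k)) := by
  constructor
  · rintro ⟨g, hg⟩ ⟨g', hg'⟩ h
    have hfib : ∀ i, fib g i = fib g' i := by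
      intro i
      have := congrArg (fun p => ((p.2 i : Finset (Fin n)))) h
      simpa [toSigma_snd_coe] using this
    refine Subtype.ext (funext fun x => ?_)
    have hx : x ∈ fib g' (g x) := (hfib (g x)) ▸ mem_fib.mpr rfl
    exact (mem_fib.mp hx).symm
  · rintro ⟨p, e⟩
    set g : Fin n → Fin k := fun x => e.symm ⟨p.1.part x, p.1.part_mem.mpr (mem_univ x)⟩
      with hgdef
    have key : ∀ i, fib g i = (e i : Finset (Fin n)) := by
      intro i
      ext x
      rw [mem_fib]
      constructor
      · intro h
        have h2 : (⟨p.1.part x, p.1.part_mem.mpr (mem_univ x)⟩ :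
            {b // b ∈ p.1.parts}) = e i := by
          rw [← h]
          simp [hgdef]
        have hpart : p.1.part x = (e i : Finset (Fin n)) := congrArg Subtype.val h2
        exact hpart ▸ p.1.mem_part (mem_univ x)
      · intro hx
        have hpart : p.1.part x = (e i : Finset (Fin n)) :=
          p.1.part_eq_of_mem (e i).2 hx
        have h2 : (⟨p.1.part x, p.1.part_mem.mpr (mem_univ x)⟩ :
            {b // b ∈ p.1.parts}) = e i := Subtype.ext hpart
        show e.symm ⟨p.1.part x, p.1.part_mem.mpr (mem_univ x)⟩ = i
        rw [h2, Equiv.symm_apply_apply]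
    clear_value g
    clear hgdef
    have hg : ∀ i, Odd (fib g i).card := by
      intro i
      rw [key i]
      exact p.2.2 _ (e i).2
    refine ⟨⟨g, hg⟩, ?_⟩
    have h1 : (toSigma ⟨g, hg⟩).1 = p := by
      refine Subtype.ext (Finpartition.ext ?_)
      show univ.image (fib g) = p.1.parts
      ext b
      simp only [Finset.mem_image, mem_univ, true_and]
      constructor
      · rintro ⟨i, rfl⟩
        rw [key i]; exact (e i).2
      · intro hb
        refine ⟨e.symm ⟨b, hb⟩, ?_⟩
        rw [key, Equiv.apply_symm_apply]
    subst h1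
    refine Sigma.ext rfl (heq_of_eq (Equiv.ext fun i => Subtype.ext ?_))
    rw [toSigma_snd_coe, key i]

instance : Finite (Finpartition (univ : Finset (Fin n))) :=
  Finite.of_injective Finpartition.parts fun _ _ h => Finpartition.ext h

lemma card_odd_fns (n k : ℕ) :
    Nat.card {g : Fin n → Fin k // ∀ i, Odd (fib g i).card}
      = k.factorial * oddStirling n k := by
  classical
  rw [Nat.card_congr (Equiv.ofBijective _ toSigma_bijective)]
  haveI : Fintype {P : Finpartition (univ : Finset (Fin n)) //
      P.parts.card = k ∧ ∀ b ∈ P.parts, Odd b.card} := Fintype.ofFinite _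
  rw [Nat.card_eq_fintype_card, Fintype.card_sigma]
  have hcard : ∀ P : {P : Finpartition (univ : Finset (Fin n)) //
      P.parts.card = k ∧ ∀ b ∈ P.parts, Odd b.card},
      Fintype.card (Fin k ≃ {b // b ∈ P.1.parts}) = k.factorial := by
    intro P
    have hPk : Fintype.card {b // b ∈ P.1.parts} = k := by
      rw [Fintype.card_coe, P.2.1]
    rw [Fintype.card_equiv (Fintype.equivOfCardEq (by simp [hPk]))]
    simp
  simp only [hcard, Finset.sum_const, card_univ, smul_eq_mul]
  rw [oddStirling, Nat.card_eq_fintype_card, mul_comm]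

lemma pow_sum_eq (n k : ℕ) (f : Fin k → ℤ) :
    (∑ i, f i) ^ n = ∑ g : Fin n → Fin k, ∏ x, f (g x) := by
  classical
  have h : (∑ i, f i) ^ n = ∏ _x : Fin n, ∑ i, f i := by
    rw [Finset.prod_const, card_univ, Fintype.card_fin]
  rw [h, Finset.prod_univ_sum (fun _ => (univ : Finset (Fin k))) (fun _ i => f i),
    Fintype.piFinset_univ]

lemma rhs_eq (n k : ℕ) :
    ∑ j ∈ Finset.range (k + 1),
        (-1 : ℤ) ^ (k - j) * (k.choose j : ℤ) * (2 * (j : ℤ) - (k : ℤ)) ^ n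
      = 2 ^ k * Nat.card {g : Fin n → Fin k // ∀ i, Odd (fib g i).card} := by
  classical
  have step1 : ∑ j ∈ Finset.range (k + 1),
        (-1 : ℤ) ^ (k - j) * (k.choose j : ℤ) * (2 * (j : ℤ) - (k : ℤ)) ^ n
      = ∑ S ∈ (univ : Finset (Fin k)).powerset,
          (-1 : ℤ) ^ (k - S.card) *
            (∑ i : Fin k, (if i ∈ S then (1 : ℤ) else -1)) ^ n := by
    rw [Finset.sum_powerset, card_univ, Fintype.card_fin]
    refine Finset.sum_congr rfl fun j hj => ?_
    rw [Finset.mem_range, Nat.lt_succ_iff] at hj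
    have hterm : ∀ S ∈ Finset.powersetCard j (univ : Finset (Fin k)),
        (-1 : ℤ) ^ (k - S.card) *
          (∑ i : Fin k, (if i ∈ S then (1 : ℤ) else -1)) ^ n
        = (-1 : ℤ) ^ (k - j) * (2 * (j : ℤ) - (k : ℤ)) ^ n := by
      intro S hS
      rw [Finset.mem_powersetCard] at hS
      have hScard : S.card = j := hS.2
      have hsum : (∑ i : Fin k, (if i ∈ S then (1 : ℤ) else -1))
          = 2 * (j : ℤ) - (k : ℤ) := by
        rw [← Finset.sum_sdiff (subset_univ S)]
        have h1 : ∑ i ∈ S, (if i ∈ S then (1:ℤ) else -1) = (j : ℤ) := by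
          rw [Finset.sum_congr rfl fun i hi => if_pos hi, Finset.sum_const, hScard]
          simp
        have h2 : ∑ i ∈ univ \ S, (if i ∈ S then (1:ℤ) else -1) = -((k : ℤ) - (j : ℤ)) := by
          rw [Finset.sum_congr rfl fun i hi => if_neg (Finset.mem_sdiff.mp hi).2,
            Finset.sum_const, Finset.card_sdiff_of_subset (subset_univ S), card_univ,
            Fintype.card_fin, hScard]
          simp [nsmul_eq_mul, Nat.cast_sub hj]
        rw [h1, h2]
        ring
      rw [hScard, hsum]
    rw [Finset.sum_congr rfl hterm, Finset.sum_const, Finset.card_powersetCard,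
      card_univ, Fintype.card_fin]
    simp [nsmul_eq_mul]
    ring
  rw [step1]
  have step2 : ∀ S : Finset (Fin k),
      (∑ i : Fin k, (if i ∈ S then (1 : ℤ) else -1)) ^ n
        = ∑ g : Fin n → Fin k, ∏ x, (if g x ∈ S then (1 : ℤ) else -1) :=
    fun S => pow_sum_eq n k _
  simp only [step2, Finset.mul_sum]
  rw [Finset.sum_comm]
  have step3 : ∀ g : Fin n → Fin k, ∀ S : Finset (Fin k),
      (∏ x, (if g x ∈ S then (1 : ℤ) else -1))
        = ∏ i : Fin k, (if i ∈ S then (1 : ℤ) else -1) ^ (fib g i).card := by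
    intro g S
    rw [← Finset.prod_fiberwise_of_maps_to (fun x _ => mem_univ (g x))
      (fun x => (if g x ∈ S then (1 : ℤ) else -1))]
    refine Finset.prod_congr rfl fun i _ => ?_
    rw [show (fib g i).card = (univ.filter fun x => g x = i).card from rfl,
      ← Finset.prod_const]
    refine Finset.prod_congr rfl fun x hx => ?_
    rw [Finset.mem_filter] at hx
    rw [hx.2]
  have step4 : ∀ g : Fin n → Fin k,
      (∑ S ∈ (univ : Finset (Fin k)).powerset,
        (-1 : ℤ) ^ (k - S.card) * ∏ x, (if g x ∈ S then (1 : ℤ) else -1))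
      = ∏ i : Fin k, ((1 : ℤ) - (-1) ^ (fib g i).card) := by
    intro g
    have expand := Finset.prod_add (fun _ : Fin k => (1 : ℤ))
      (fun i => -((-1 : ℤ) ^ (fib g i).card)) univ
    have lhs_eq : ∏ i : Fin k, ((1 : ℤ) + -((-1 : ℤ) ^ (fib g i).card))
        = ∏ i : Fin k, ((1 : ℤ) - (-1) ^ (fib g i).card) :=
      Finset.prod_congr rfl fun i _ => by ring
    rw [← lhs_eq, expand]
    refine (Finset.sum_congr rfl fun S hS => ?_).symm
    rw [Finset.mem_powerset] at hS
    rw [step3 g S]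
    have hsplit : (∏ i : Fin k, (if i ∈ S then (1 : ℤ) else -1) ^ (fib g i).card)
        = (∏ i ∈ univ \ S, (-1 : ℤ) ^ (fib g i).card) := by
      rw [← Finset.prod_sdiff hS
        (f := fun i => (if i ∈ S then (1 : ℤ) else -1) ^ (fib g i).card)]
      have h1 : (∏ i ∈ S, (if i ∈ S then (1 : ℤ) else -1) ^ (fib g i).card) = 1 :=
        Finset.prod_eq_one fun i hi => by rw [if_pos hi, one_pow]
      have h2 : (∏ i ∈ univ \ S, (if i ∈ S then (1 : ℤ) else -1) ^ (fib g i).card)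
          = ∏ i ∈ univ \ S, (-1 : ℤ) ^ (fib g i).card := by
        refine Finset.prod_congr rfl fun i hi => ?_
        rw [Finset.mem_sdiff] at hi
        rw [if_neg hi.2]
      rw [h1, h2, mul_one]
    have hneg : (∏ i ∈ univ \ S, -((-1 : ℤ) ^ (fib g i).card))
        = (-1 : ℤ) ^ (k - S.card) * ∏ i ∈ univ \ S, (-1 : ℤ) ^ (fib g i).card := by
      have hh : ∀ i ∈ univ \ S, -((-1 : ℤ) ^ (fib g i).card)
          = (-1) * ((-1 : ℤ) ^ (fib g i).card) := fun i _ => by ring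
      rw [Finset.prod_congr rfl hh, Finset.prod_mul_distrib, Finset.prod_const,
        Finset.card_sdiff_of_subset hS, card_univ, Fintype.card_fin]
    rw [hsplit, hneg, Finset.prod_const_one, one_mul]
  have step5 : ∀ g : Fin n → Fin k,
      (∏ i : Fin k, ((1 : ℤ) - (-1) ^ (fib g i).card))
        = if (∀ i, Odd (fib g i).card) then (2 : ℤ) ^ k else 0 := by
    intro g
    by_cases h : ∀ i, Odd (fib g i).card
    · rw [if_pos h]
      have hh : ∀ i ∈ (univ : Finset (Fin k)), (1 : ℤ) - (-1) ^ (fib g i).card = 2 := by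
        intro i _
        rw [(h i).neg_one_pow]
        ring
      rw [Finset.prod_congr rfl hh, Finset.prod_const, card_univ, Fintype.card_fin]
    · rw [if_neg h]
      push_neg at h
      obtain ⟨i, hi⟩ := h
      refine Finset.prod_eq_zero (mem_univ i) ?_
      rw [Nat.not_odd_iff_even] at hi
      rw [hi.neg_one_pow]
      ring
  rw [Finset.sum_congr rfl fun g _ => (step4 g).trans (step5 g)]
  rw [Finset.sum_ite, Finset.sum_const, Finset.sum_const_zero, add_zero]
  rw [Nat.card_eq_fintype_card, Fintype.card_subtype]
  simp [nsmul_eq_mul]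
  ring

end OddStirlingAux

/-- `2^k · k! · O(n,k) = ∑_{j=0}^{k} (−1)^{k−j} · C(k,j) · (2j − k)^n` in the integers. -/
theorem stmt4 (n k : ℕ) :
    (2 ^ k * k.factorial * oddStirling n k : ℤ)
      = ∑ j ∈ Finset.range (k + 1),
          (-1 : ℤ) ^ (k - j) * (k.choose j : ℤ) * (2 * (j : ℤ) - (k : ℤ)) ^ n := by
  rw [OddStirlingAux.rhs_eq, OddStirlingAux.card_odd_fns]
  push_cast
  ring
end

section
/- For all natural numbers n, k₁, k₂, the following two sums are equal: ∑_{i=k₁}^{n} C(n,i) · O(i,k₁) · ( ∑_{j=k₂}^{⌊(n−i)/2⌋} C(j,k₂) · E(n−i, j) ) = ∑_{i=k₂}^{⌊(n−k₁)/2⌋} C(n, 2i) · ( ∑_{j=k₂}^{i} C(j,k₂) · E(2i, j) ) · O(n−2i, k₁), where C denotes the binomial coefficient. -/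
/-- `E(m,k)`: the number of set partitions of an `m`-element set into exactly `k` nonempty
blocks, each of even cardinality. -/
noncomputable def evenStirling (m k : ℕ) : ℕ :=
  Nat.card {P : Finpartition (Finset.univ : Finset (Fin m)) //
    P.parts.card = k ∧ ∀ b ∈ P.parts, Even b.card}

/-!
Reflecting `i ↦ n - i`, the left side sums over the size `m = n - i` of the even part. Since a
partition into even blocks exists only on an even number of points, only `m = 2i` contributes,
and the terms added or dropped by the two different summation ranges vanish.
-/

open Finset

lemma evenStirling_eq_zero_of_odd {m k : ℕ} (hm : Odd m) : evenStirling m k = 0 := by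
  refine Nat.card_eq_zero.mpr (.inl ⟨fun ⟨P, _, hP⟩ => ?_⟩)
  have hsum : Even (∑ b ∈ P.parts, b.card) := even_sum _ hP
  rw [P.sum_card_parts, card_univ, Fintype.card_fin] at hsum
  exact Nat.not_even_iff_odd.mpr hm hsum

lemma oddStirling_eq_zero_of_lt {n k : ℕ} (h : n < k) : oddStirling n k = 0 := by
  refine Nat.card_eq_zero.mpr (.inl ⟨fun ⟨P, hk, _⟩ => ?_⟩)
  have := P.card_parts_le_card
  rw [hk, card_univ, Fintype.card_fin] at this
  omega

/-- The number of partitions of `m` points into even blocks, `k` of which are marked as defects. -/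
noncomputable def evenDefectCount (k m : ℕ) : ℕ :=
  ∑ j ∈ Icc k (m / 2), j.choose k * evenStirling m j

lemma evenDefectCount_eq_zero_of_odd (k : ℕ) {m : ℕ} (hm : Odd m) : evenDefectCount k m = 0 :=
  sum_eq_zero fun j _ => by rw [evenStirling_eq_zero_of_odd hm, mul_zero]

lemma evenDefectCount_two_mul (k i : ℕ) :
    evenDefectCount k (2 * i) = ∑ j ∈ Icc k i, j.choose k * evenStirling (2 * i) j := by
  rw [evenDefectCount, Nat.mul_div_cancel_left i two_pos]

lemma sum_range_succ_eq_sum_range_two_mul_of_odd {M : Type*} [AddCommMonoid M] (g : ℕ → M)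
    (hg : ∀ m, Odd m → g m = 0) (N : ℕ) :
    ∑ m ∈ range (N + 1), g m = ∑ i ∈ range (N / 2 + 1), g (2 * i) := by
  rw [← sum_image fun a _ b _ h => Nat.eq_of_mul_eq_mul_left two_pos h]
  refine (sum_subset (fun m hm => ?_) fun m hm hm' => hg m ?_).symm
  · obtain ⟨i, hi, rfl⟩ := mem_image.mp hm
    simp only [mem_range] at hi ⊢
    omega
  · obtain ⟨i, hi⟩ := Nat.even_or_odd' m
    refine hi.elim (fun h => absurd (mem_image.mpr ⟨i, ?_, h.symm⟩) hm') fun h => ⟨i, h⟩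
    simp only [mem_range] at hm ⊢
    omega

lemma sum_Icc_choose_oddStirling_eq_sum_range (n k₁ k₂ : ℕ) :
    ∑ i ∈ Icc k₁ n, n.choose i * oddStirling i k₁ * evenDefectCount k₂ (n - i)
      = ∑ m ∈ range (n + 1), n.choose m * evenDefectCount k₂ m * oddStirling (n - m) k₁ := by
  rw [← sum_range_reflect]
  refine sum_subset (fun i hi => ?_) (fun i hi hi' => ?_) |>.trans (sum_congr rfl fun i hi => ?_)
  · simp only [mem_Icc, mem_range] at hi ⊢
    omega
  · simp only [mem_Icc, mem_range, not_and_or] at hi hi'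
    rw [oddStirling_eq_zero_of_lt (by omega), mul_zero, zero_mul]
  · have hin : i ≤ n := Nat.le_of_lt_succ (mem_range.mp hi)
    rw [Nat.add_sub_cancel, Nat.sub_sub_self hin, Nat.choose_symm hin]
    ring

lemma sum_Icc_choose_two_mul_eq_sum_range (n k₁ k₂ : ℕ) :
    ∑ i ∈ Icc k₂ ((n - k₁) / 2),
        n.choose (2 * i) * evenDefectCount k₂ (2 * i) * oddStirling (n - 2 * i) k₁
      = ∑ i ∈ range (n / 2 + 1),
        n.choose (2 * i) * evenDefectCount k₂ (2 * i) * oddStirling (n - 2 * i) k₁ := by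
  refine sum_subset (fun i hi => ?_) fun i hi hi' => ?_
  · simp only [mem_Icc, mem_range] at hi ⊢
    omega
  · simp only [mem_Icc, mem_range, not_and_or, not_le] at hi hi'
    rcases hi' with hik | hik
    · rw [evenDefectCount_two_mul, Icc_eq_empty_of_lt hik, sum_empty, mul_zero, zero_mul]
    · rw [oddStirling_eq_zero_of_lt (by omega), mul_zero]

/-- The two expressions for the dimension of the cell modules of the parity matching algebra
agree. -/
theorem stmt8 (n k₁ k₂ : ℕ) :
    ∑ i ∈ Finset.Icc k₁ n,
        n.choose i * oddStirling i k₁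
          * (∑ j ∈ Finset.Icc k₂ ((n - i) / 2), j.choose k₂ * evenStirling (n - i) j)
      = ∑ i ∈ Finset.Icc k₂ ((n - k₁) / 2),
          n.choose (2 * i) * (∑ j ∈ Finset.Icc k₂ i, j.choose k₂ * evenStirling (2 * i) j)
            * oddStirling (n - 2 * i) k₁ := by
  simp only [← evenDefectCount_two_mul]
  change ∑ i ∈ Icc k₁ n, n.choose i * oddStirling i k₁ * evenDefectCount k₂ (n - i) = _
  rw [sum_Icc_choose_oddStirling_eq_sum_range, sum_Icc_choose_two_mul_eq_sum_range]
  exact sum_range_succ_eq_sum_range_two_mul_of_odd _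
    (fun m hm => by rw [evenDefectCount_eq_zero_of_odd k₂ hm, mul_zero, zero_mul]) n
end

section
/- For every natural number n, the double factorial identity (2n−1)!! = ∑_{m=0}^{⌊n/2⌋} (n−2m)! · C(n, 2m)² · ((2m−1)!!)² holds, where C denotes the binomial coefficient and (2m−1)!! = ∏_{i=1}^{m} (2i−1) with the empty product equal to 1. -/
open Polynomial Finset

/-- The odd double factorial `(2m−1)!! = ∏_{i=1}^{m} (2i−1)`, with the empty product equal
to `1`. -/
def oddDoubleFactorial (m : ℕ) : ℕ := ∏ i ∈ Finset.range m, (2 * i + 1)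

/-- `(2m−1)!! · 2^m · m! = (2m)!`. -/
theorem odf_mul_aux (m : ℕ) :
    oddDoubleFactorial m * (2 ^ m * m.factorial) = (2 * m).factorial := by
  induction m with
  | zero => simp [oddDoubleFactorial]
  | succ m ih =>
    have e1 : (2 * (m + 1)).factorial = (2*m+2) * ((2*m+1) * (2*m).factorial) := by
      rw [show 2 * (m + 1) = 2*m+1+1 by ring, Nat.factorial_succ, Nat.factorial_succ]
    rw [e1, ← ih]
    simp only [oddDoubleFactorial, Finset.prod_range_succ, Nat.factorial_succ, pow_succ]
    ring

/-- Key binomial identity, by extracting the coefficient of `X^n` in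
`(X+1)^{2n} = (X(X+2) + 1)^n`. -/
theorem key_sum_aux (n : ℕ) :
    ∑ m ∈ Finset.range (n / 2 + 1),
        2 ^ (n - 2 * m) * n.choose m * (n - m).choose m = (2 * n).choose n := by
  have hc2 : (C 2 : ℕ[X]) = 2 := by norm_num
  have h0 : (((X : ℕ[X]) + 1) ^ (2 * n)).coeff n = (2 * n).choose n := by
    simpa using coeff_X_add_one_pow ℕ (2 * n) n
  have h1 : ((X : ℕ[X]) + 1) ^ (2 * n) = ((X * (X + C 2)) + 1) ^ n := by
    rw [pow_mul]
    congr 1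
    rw [hc2]
    ring
  have h2 : (((X * (X + C 2)) + 1 : ℕ[X]) ^ n).coeff n
      = ∑ k ∈ range (n + 1), 2 ^ (k - (n - k)) * k.choose (n - k) * n.choose k := by
    rw [add_pow]
    rw [finset_sum_coeff]
    refine Finset.sum_congr rfl fun k hk => ?_
    have hk' : k ≤ n := Nat.lt_succ_iff.mp (Finset.mem_range.mp hk)
    rw [one_pow, mul_one, mul_pow, ← C_eq_natCast, coeff_mul_C]
    have h3 : ((X : ℕ[X]) ^ k * (X + C 2) ^ k).coeff n
        = ((X + C 2 : ℕ[X]) ^ k).coeff (n - k) := by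
      conv_lhs => rw [show n = (n - k) + k by omega]
      rw [coeff_X_pow_mul]
    rw [h3, coeff_X_add_C_pow]
    push_cast
    ring
  have h4 : ∑ k ∈ range (n + 1), 2 ^ (k - (n - k)) * k.choose (n - k) * n.choose k
      = ∑ m ∈ range (n + 1), 2 ^ (n - 2 * m) * n.choose m * (n - m).choose m := by
    rw [← Finset.sum_range_reflect]
    refine Finset.sum_congr rfl fun m hm => ?_
    have hm' : m ≤ n := Nat.lt_succ_iff.mp (Finset.mem_range.mp hm)
    have e1 : n + 1 - 1 - m = n - m := by omega
    have e2 : n - (n - m) = m := by omega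
    have e3 : (n - m) - m = n - 2 * m := by omega
    rw [e1, e2, e3, Nat.choose_symm hm']
    ring
  have h5 : ∑ m ∈ range (n + 1), 2 ^ (n - 2 * m) * n.choose m * (n - m).choose m
      = ∑ m ∈ Finset.range (n / 2 + 1), 2 ^ (n - 2 * m) * n.choose m * (n - m).choose m := by
    refine (Finset.sum_subset ?_ ?_).symm
    · intro x hx
      simp only [Finset.mem_range] at *
      omega
    · intro x hx hx'
      simp only [Finset.mem_range] at *
      have : (n - x).choose x = 0 := Nat.choose_eq_zero_of_lt (by omega)
      simp [this]
  rw [h5.symm, ← h4, ← h2, ← h1, h0]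

/-- Termwise identity relating the summands to the key binomial sum. -/
theorem termwise_aux (n m : ℕ) (h : 2 * m ≤ n) :
    (n - 2 * m).factorial * (n.choose (2 * m)) ^ 2 * (oddDoubleFactorial m) ^ 2
        * (2 ^ n * n.factorial)
      = 2 ^ (n - 2 * m) * n.choose m * ((n - m).choose m) * (n.factorial * n.factorial) := by
  have hm : m ≤ n := by omega
  have hmm : m ≤ n - m := by omega
  have e3 : n - m - m = n - 2 * m := by omega
  apply Nat.cast_inj (R := ℚ).mp
  push_cast
  have hd : (oddDoubleFactorial m : ℚ) = (2 * m).factorial / (2 ^ m * m.factorial) := by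
    have := odf_mul_aux m
    field_simp
    rw [← mul_assoc] at this
    exact_mod_cast this
  rw [hd, Nat.cast_choose ℚ h, Nat.cast_choose ℚ hm, Nat.cast_choose ℚ hmm, e3,
    show (2:ℚ) ^ n = 2 ^ (n - 2 * m) * (2 ^ m) ^ 2 by
      rw [← pow_mul, ← pow_add]; congr 1; omega]
  have f1 : ((n - 2 * m).factorial : ℚ) ≠ 0 := Nat.cast_ne_zero.mpr (Nat.factorial_ne_zero _)
  have f2 : ((2 * m).factorial : ℚ) ≠ 0 := Nat.cast_ne_zero.mpr (Nat.factorial_ne_zero _)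
  have f3 : (m.factorial : ℚ) ≠ 0 := Nat.cast_ne_zero.mpr (Nat.factorial_ne_zero _)
  have f4 : ((n - m).factorial : ℚ) ≠ 0 := Nat.cast_ne_zero.mpr (Nat.factorial_ne_zero _)
  have f5 : (2:ℚ) ^ m ≠ 0 := by positivity
  field_simp

/-- `(2n−1)!! = ∑_{m=0}^{⌊n/2⌋} (n−2m)! · C(n, 2m)² · ((2m−1)!!)²`. -/
theorem stmt10 (n : ℕ) :
    oddDoubleFactorial n
      = ∑ m ∈ Finset.range (n / 2 + 1),
          (n - 2 * m).factorial * (n.choose (2 * m)) ^ 2 * (oddDoubleFactorial m) ^ 2 := by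
  have hpos : 0 < 2 ^ n * n.factorial := by positivity
  apply Nat.eq_of_mul_eq_mul_right hpos
  rw [odf_mul_aux n, Finset.sum_mul]
  have hsum : ∑ m ∈ Finset.range (n / 2 + 1),
      (n - 2 * m).factorial * (n.choose (2 * m)) ^ 2 * (oddDoubleFactorial m) ^ 2
        * (2 ^ n * n.factorial)
      = ∑ m ∈ Finset.range (n / 2 + 1),
          2 ^ (n - 2 * m) * n.choose m * ((n - m).choose m) * (n.factorial * n.factorial) := by
    refine Finset.sum_congr rfl fun m hm => ?_
    have : 2 * m ≤ n := by
      have := Finset.mem_range.mp hm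
      omega
    exact termwise_aux n m this
  rw [hsum, ← Finset.sum_mul, key_sum_aux]
  have := Nat.choose_mul_factorial_mul_factorial (show n ≤ 2 * n by omega)
  rw [show 2 * n - n = n by omega] at this
  rw [← this]
  ring
end

section
/- For every natural number n, the n-th Catalan number satisfies C_n = ∑_{k=0}^{⌊n/2⌋} ( C(n,k) − C(n,k−1) )², where C(n,k) denotes the binomial coefficient with the convention C(n,−1) = 0, and C_n = C(2n,n)/(n+1) is the n-th Catalan number. -/
/-!
Expanding `(C(n,k) - C(n,k-1))²` and summing over the whole row `0 ≤ k ≤ n + 1`, Vandermonde's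
identity turns the two squares into `C(2n,n)` each and the cross terms into `C(2n,n+1)`, so the
full sum is `2 (C(2n,n) - C(2n,n+1)) = 2 C_n`. The reflection `k ↦ n + 1 - k` negates the ballot
numbers, so the full sum is twice the sum over `k ≤ ⌊n/2⌋`.
-/

open Finset

theorem Nat.sum_range_choose_succ_mul_choose (n : ℕ) :
    ∑ i ∈ range (n + 1), n.choose (i + 1) * n.choose i = (2 * n).choose (n + 1) := by
  rw [two_mul, Nat.add_choose_eq, Finset.Nat.sum_antidiagonal_eq_sum_range_succ_mk,
    sum_range_succ' _ (n + 1)]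
  simp only [Nat.choose_zero_right, Nat.sub_zero, Nat.choose_succ_self, mul_zero, add_zero]
  refine sum_congr rfl fun i hi => ?_
  rw [Nat.choose_symm_of_eq_add (by simp at hi; omega : n = n + 1 - (i + 1) + i)]

theorem catalan_add_choose_succ (n : ℕ) :
    catalan n + (2 * n).choose (n + 1) = (2 * n).choose n := by
  have hcross : (2 * n).choose (n + 1) * (n + 1) = (2 * n).choose n * n := by
    rw [Nat.choose_succ_right_eq, show 2 * n - n = n by omega]
  have hcat : (n + 1) * catalan n = (2 * n).choose n := succ_mul_catalan_eq_centralBinom n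
  apply Nat.eq_of_mul_eq_mul_right n.succ_pos
  nlinarith

theorem Finset.sum_range_sq_eq_two_mul_of_antisymm (g : ℕ → ℤ) (N : ℕ)
    (hg : ∀ k ≤ N, g (N - k) = -g k) :
    ∑ k ∈ range (N + 1), g k ^ 2 = 2 * ∑ k ∈ range ((N + 1) / 2), g k ^ 2 := by
  have tail : ∀ h L, h + L = N + 1 → ∑ k ∈ range L, g (h + k) ^ 2 = ∑ k ∈ range L, g k ^ 2 := by
    intro h L hL
    rw [← sum_range_reflect]
    refine sum_congr rfl fun k hk => ?_
    have hk : k < L := mem_range.mp hk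
    rw [show h + (L - 1 - k) = N - k by omega, hg k (by omega), neg_sq]
  rcases Nat.even_or_odd' N with ⟨m, rfl | rfl⟩
  · have hmid : g m = 0 := by
      have := hg m (by omega)
      rw [show 2 * m - m = m by omega] at this
      omega
    rw [show (2 * m + 1) / 2 = m by omega, show 2 * m + 1 = m + (m + 1) by omega, sum_range_add,
      tail m (m + 1) (by omega), sum_range_succ, hmid]
    ring
  · rw [show (2 * m + 1 + 1) / 2 = m + 1 by omega,
      show 2 * m + 1 + 1 = (m + 1) + (m + 1) by omega, sum_range_add,
      tail (m + 1) (m + 1) (by omega)]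
    ring

def ballot (n k : ℕ) : ℤ :=
  (n.choose k : ℤ) - (if k = 0 then 0 else (n.choose (k - 1) : ℤ))

lemma ballot_reflect {n k : ℕ} (hk : k ≤ n + 1) : ballot n (n + 1 - k) = -ballot n k := by
  unfold ballot
  rcases Nat.eq_zero_or_pos k with rfl | hk0
  · simp
  rcases hk.eq_or_lt with rfl | hkn
  · simp
  rw [if_neg (by omega), if_neg (by omega),
    Nat.choose_symm_of_eq_add (by omega : n = n + 1 - k + (k - 1)),
    Nat.choose_symm_of_eq_add (by omega : n = n + 1 - k - 1 + k)]
  ring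

lemma sum_range_ballot_sq (n : ℕ) :
    ∑ k ∈ range (n + 2), ballot n k ^ 2
      = 2 * ((2 * n).choose n - (2 * n).choose (n + 1) : ℤ) := by
  have hsq : ∑ k ∈ range (n + 2), (n.choose k : ℤ) ^ 2 = (2 * n).choose n := by
    rw [sum_range_succ, Nat.choose_succ_self]
    exact_mod_cast congrArg (· + 0 ^ 2) (Nat.sum_range_choose_sq n)
  have hshift_sq : ∑ k ∈ range (n + 2), (if k = 0 then 0 else (n.choose (k - 1) : ℤ)) ^ 2
      = (2 * n).choose n := by
    rw [sum_range_succ']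
    simpa using congrArg (Nat.cast : ℕ → ℤ) (Nat.sum_range_choose_sq n)
  have hcross :
      ∑ k ∈ range (n + 2), (n.choose k : ℤ) * (if k = 0 then 0 else (n.choose (k - 1) : ℤ))
        = (2 * n).choose (n + 1) := by
    rw [sum_range_succ']
    simpa using congrArg (Nat.cast : ℕ → ℤ) (Nat.sum_range_choose_succ_mul_choose n)
  calc ∑ k ∈ range (n + 2), ballot n k ^ 2
      = ∑ k ∈ range (n + 2), ((n.choose k : ℤ) ^ 2
          + (if k = 0 then 0 else (n.choose (k - 1) : ℤ)) ^ 2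
          - 2 * ((n.choose k : ℤ) * (if k = 0 then 0 else (n.choose (k - 1) : ℤ)))) :=
        sum_congr rfl fun k _ => by unfold ballot; ring
    _ = _ := by rw [sum_sub_distrib, sum_add_distrib, ← mul_sum, hsq, hshift_sq, hcross]; ring

/-- The Catalan number `C_n` is the sum of the squares of the ballot numbers
`C(n,k) − C(n,k−1)` for `0 ≤ k ≤ ⌊n/2⌋`, with the convention `C(n,−1) = 0`. -/
theorem stmt13 (n : ℕ) :
    (catalan n : ℤ)
      = ∑ k ∈ Finset.range (n / 2 + 1),
          ((n.choose k : ℤ) - (if k = 0 then 0 else (n.choose (k - 1) : ℤ))) ^ 2 := by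
  have hhalf := sum_range_sq_eq_two_mul_of_antisymm (ballot n) (n + 1) fun _ => ballot_reflect
  rw [sum_range_ballot_sq, show (n + 1 + 1) / 2 = n / 2 + 1 by omega] at hhalf
  have hcat := congrArg (Nat.cast : ℕ → ℤ) (catalan_add_choose_succ n)
  push_cast at hcat
  change (catalan n : ℤ) = ∑ k ∈ range (n / 2 + 1), ballot n k ^ 2
  linarith
end

section
/- Define the Riordan triangle numbers by R(0,0) = 1, R(n,k) = 0 whenever k < 0 or k > n, and for n ≥ 1: R(n,0) = R(n−1, 1) and R(n,k) = R(n−1, k−1) + R(n−1, k) + R(n−1, k+1) for 1 ≤ k ≤ n. Then for every natural number n, R(2n, 0) = ∑_{k=0}^{n} R(n,k)². -/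
/-!
Let `u_n = R(n, ·)`. The recurrence says `u_{n+1} = T u_n` for the tridiagonal operator
`(T f)(k) = f(k-1) + [k ≥ 1] f(k) + f(k+1)`, which is symmetric. Hence `⟪u_{a+1}, u_b⟫ = ⟪u_a, u_{b+1}⟫`,
and moving all `n` steps across gives `R(2n, 0) = ⟪u_{2n}, u_0⟫ = ⟪u_n, u_n⟫`.
-/

open Finset

structure IsRiordanRecurrence (R : ℕ → ℤ → ℕ) : Prop where
  eq_zero_of_out : ∀ (n : ℕ) (k : ℤ), k < 0 ∨ (n : ℤ) < k → R n k = 0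
  succ_zero : ∀ n : ℕ, R (n + 1) 0 = R n 1
  succ_of_le : ∀ (n : ℕ) (k : ℤ), 1 ≤ k → k ≤ (n : ℤ) + 1 →
    R (n + 1) k = R n (k - 1) + R n k + R n (k + 1)

namespace IsRiordanRecurrence

variable {R : ℕ → ℤ → ℕ}

theorem succ (hR : IsRiordanRecurrence R) (n : ℕ) {k : ℤ} (hk : 1 ≤ k) :
    R (n + 1) k = R n (k - 1) + R n k + R n (k + 1) := by
  rcases le_or_gt k ((n : ℤ) + 1) with hle | hgt
  · exact hR.succ_of_le n k hk hle
  · have hout : ∀ (m : ℕ) (j : ℤ), (m : ℤ) < j → R m j = 0 := fun m j h =>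
      hR.eq_zero_of_out m j (Or.inr h)
    rw [hout (n + 1) k (by push_cast; omega), hout n (k - 1) (by omega), hout n k (by omega),
      hout n (k + 1) (by omega)]

theorem neg_one (hR : IsRiordanRecurrence R) (n : ℕ) : R n (-1) = 0 :=
  hR.eq_zero_of_out n (-1) (Or.inl (by norm_num))

/-- Discrete Green identity for the symmetric transfer operator, with the boundary term moved so
that no subtraction occurs. -/
theorem sum_succ_mul_add (hR : IsRiordanRecurrence R) (a b N : ℕ) :
    ∑ k ∈ range N, R (a + 1) k * R b k + R a ((N : ℤ) - 1) * R b N =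
      ∑ k ∈ range N, R a k * R (b + 1) k + R a N * R b ((N : ℤ) - 1) := by
  induction N with
  | zero => simp [hR.neg_one]
  | succ N ih =>
    rw [sum_range_succ, sum_range_succ]
    push_cast
    rw [add_sub_cancel_right]
    rcases N with _ | N
    · simp [hR.succ_zero]
      ring
    · have h1 : (1 : ℤ) ≤ ((N + 1 : ℕ) : ℤ) := by omega
      rw [hR.succ a h1, hR.succ b h1]
      push_cast at ih ⊢
      simp only [add_sub_cancel_right] at ih ⊢
      linarith

theorem sum_succ_mul (hR : IsRiordanRecurrence R) {a b N : ℕ} (ha : a < N) (hb : b < N) :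
    ∑ k ∈ range N, R (a + 1) k * R b k = ∑ k ∈ range N, R a k * R (b + 1) k := by
  have h := hR.sum_succ_mul_add a b N
  rwa [hR.eq_zero_of_out a N (Or.inr (by omega)), hR.eq_zero_of_out b N (Or.inr (by omega)),
    mul_zero, zero_mul, add_zero, add_zero] at h

theorem sum_add_mul (hR : IsRiordanRecurrence R) {N : ℕ} (j : ℕ) {a b : ℕ} (ha : a + j < N)
    (hb : b + j < N) :
    ∑ k ∈ range N, R (a + j) k * R b k = ∑ k ∈ range N, R a k * R (b + j) k := by
  induction j generalizing b with
  | zero => rfl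
  | succ j ih =>
    rw [← add_assoc, hR.sum_succ_mul (by omega) (by omega), ih (by omega) (by omega),
      add_right_comm, add_assoc]

theorem zero_row (hR : IsRiordanRecurrence R) (h0 : R 0 0 = 1) {k : ℕ} :
    R 0 k = if k = 0 then 1 else 0 := by
  split_ifs with hk
  · simp [hk, h0]
  · exact hR.eq_zero_of_out 0 k (Or.inr (by simp; omega))

end IsRiordanRecurrence

/-- For any family `R : ℕ → ℤ → ℕ` satisfying the defining recurrence of the Riordan triangle
numbers (`R(0,0) = 1`, `R(n,k) = 0` for `k < 0` or `k > n`, `R(n,0) = R(n−1,1)` for `n ≥ 1`,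
and `R(n,k) = R(n−1,k−1) + R(n−1,k) + R(n−1,k+1)` for `n ≥ 1` and `1 ≤ k ≤ n`), we have
`R(2n, 0) = ∑_{k=0}^{n} R(n,k)²`. -/
theorem stmt15 (R : ℕ → ℤ → ℕ)
    (h0 : R 0 0 = 1)
    (hout : ∀ (n : ℕ) (k : ℤ), k < 0 ∨ (n : ℤ) < k → R n k = 0)
    (hzero : ∀ n : ℕ, R (n + 1) 0 = R n 1)
    (hrec : ∀ (n : ℕ) (k : ℤ), 1 ≤ k → k ≤ (n : ℤ) + 1 →
      R (n + 1) k = R n (k - 1) + R n k + R n (k + 1)) :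
    ∀ n : ℕ, R (2 * n) 0 = ∑ k ∈ Finset.range (n + 1), (R n k) ^ 2 := by
  intro n
  have hR : IsRiordanRecurrence R := ⟨hout, hzero, hrec⟩
  have hswap := hR.sum_add_mul (N := 2 * n + 1) n (a := n) (b := 0) (by omega) (by omega)
  rw [← two_mul, zero_add] at hswap
  calc R (2 * n) 0 = ∑ k ∈ range (2 * n + 1), R (2 * n) k * R 0 k := by
        simp [hR.zero_row h0]
    _ = ∑ k ∈ range (2 * n + 1), R n k ^ 2 := by simp_rw [hswap, sq]
    _ = ∑ k ∈ range (n + 1), R n k ^ 2 := by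
        refine (sum_subset (range_subset_range.mpr (by omega)) fun k _ hk => ?_).symm
        rw [hout n k (Or.inr (by simp at hk; omega)), zero_pow two_ne_zero]
end
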